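/- arXiv:2412.04985 — 8 statements merged into one kernel-verified Lean document; each statement's English description precedes it below -/
import Mathlib

section
/- Let K be a finite field of characteristic p, f(X) = X^p − X + ξ ∈ K[X] irreducible over K, and γ a root of f in an extension field. For a, b, d ∈ K with d ≠ 0: if p ≥ 3 then Tr_{K(γ)/K}((aγ + b)/d) = 0, and if p = 2 then Tr_{K(γ)/K}((aγ + b)/d) = a/d. -/
open Polynomial IntermediateField

/-!
The minimal polynomial of `γ` is `X ^ p - X + ξ`, so `[K(γ) : K] = p` and the trace of every
element of `K` vanishes in characteristic `p`. By linearity only `a/d · Tr γ` survives, and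
`Tr γ` is minus the coefficient of `X ^ (p - 1)`, which is `0` for `p ≥ 3` and `-1` for `p = 2`.
-/

namespace Polynomial

variable {R : Type*} [CommRing R] {n : ℕ}

lemma X_pow_sub_X_add_C_eq (n : ℕ) (ξ : R) : (X ^ n - X + C ξ : R[X]) = X ^ n - (X - C ξ) := by
  ring

variable [Nontrivial R]

lemma degree_X_sub_C_lt_of_two_le (hn : 2 ≤ n) (ξ : R) : (X - C ξ : R[X]).degree < n := by
  rw [degree_X_sub_C]
  exact_mod_cast (by omega : 1 < n)

lemma monic_X_pow_sub_X_add_C (hn : 2 ≤ n) (ξ : R) : (X ^ n - X + C ξ : R[X]).Monic := by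
  rw [X_pow_sub_X_add_C_eq]
  exact monic_X_pow_sub (degree_X_sub_C_lt_of_two_le hn ξ)

lemma natDegree_X_pow_sub_X_add_C (hn : 2 ≤ n) (ξ : R) :
    (X ^ n - X + C ξ : R[X]).natDegree = n := by
  rw [X_pow_sub_X_add_C_eq, natDegree_sub_eq_left_of_natDegree_lt, natDegree_X_pow]
  rw [natDegree_X_sub_C, natDegree_X_pow]
  omega

lemma nextCoeff_X_pow_sub_X_add_C_of_three_le (hn : 3 ≤ n) (ξ : R) :
    (X ^ n - X + C ξ : R[X]).nextCoeff = 0 := by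
  rw [nextCoeff_of_natDegree_pos, natDegree_X_pow_sub_X_add_C (by omega)]
  · simp only [coeff_add, coeff_sub, coeff_X_pow, coeff_X, coeff_C]
    rw [if_neg (by omega), if_neg (by omega), if_neg (by omega)]
    ring
  · rw [natDegree_X_pow_sub_X_add_C (by omega)]; omega

lemma nextCoeff_X_sq_sub_X_add_C (ξ : R) : (X ^ 2 - X + C ξ : R[X]).nextCoeff = -1 := by
  rw [nextCoeff_of_natDegree_pos, natDegree_X_pow_sub_X_add_C le_rfl]
  · simp [coeff_X]
  · rw [natDegree_X_pow_sub_X_add_C le_rfl]; omega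

end Polynomial

section

variable {K L : Type*} [Field K] [Field L] [Algebra K L] {γ : L}

noncomputable def powerBasisOfAdjoinSimpleEqTop (hγ : IsIntegral K γ) (hgen : K⟮γ⟯ = ⊤) :
    PowerBasis K L :=
  .ofAdjoinEqTop hγ ((adjoin_simple_eq_top_iff_of_isAlgebraic hγ.isAlgebraic).mp hgen)

lemma finrank_eq_natDegree_minpoly_of_adjoin_simple_eq_top (hγ : IsIntegral K γ)
    (hgen : K⟮γ⟯ = ⊤) :
    Module.finrank K L = (minpoly K γ).natDegree :=
  (powerBasisOfAdjoinSimpleEqTop hγ hgen).finrank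

lemma trace_eq_neg_nextCoeff_minpoly_of_adjoin_simple_eq_top (hγ : IsIntegral K γ)
    (hgen : K⟮γ⟯ = ⊤) :
    Algebra.trace K L γ = -(minpoly K γ).nextCoeff :=
  (powerBasisOfAdjoinSimpleEqTop hγ hgen).trace_gen_eq_nextCoeff_minpoly

lemma trace_algebraMap_mul_add_algebraMap_div (a b d : K) (x : L) :
    Algebra.trace K L ((algebraMap K L a * x + algebraMap K L b) / algebraMap K L d) =
      (a * Algebra.trace K L x + Module.finrank K L • b) / d := by
  rw [div_eq_inv_mul, ← map_inv₀, ← Algebra.smul_def, ← Algebra.smul_def, map_smul, map_add,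
    map_smul, Algebra.trace_algebraMap, smul_eq_mul, smul_eq_mul, div_eq_inv_mul]

lemma minpoly_eq_X_pow_sub_X_add_C {p : ℕ} (hp : 2 ≤ p) {ξ : K}
    (hirr : Irreducible (X ^ p - X + C ξ))
    (hroot : γ ^ p - γ + algebraMap K L ξ = 0) : minpoly K γ = X ^ p - X + C ξ := by
  refine (minpoly.eq_of_irreducible_of_monic hirr ?_ (monic_X_pow_sub_X_add_C hp ξ)).symm
  simpa using hroot

end

theorem trace_linear_div_const_general (p : ℕ) (K L : Type*) [Field K]
    [CharP K p] [Field L] [Algebra K L] (ξ : K)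
    (hirr : Irreducible (X ^ p - X + C ξ)) (γ : L)
    (hroot : γ ^ p - γ + algebraMap K L ξ = 0)
    (hgen : IntermediateField.adjoin K {γ} = ⊤)
    (a b d : K) :
    (3 ≤ p →
      Algebra.trace K L ((algebraMap K L a * γ + algebraMap K L b) / algebraMap K L d) = 0) ∧
    (p = 2 →
      Algebra.trace K L ((algebraMap K L a * γ + algebraMap K L b) / algebraMap K L d) = a / d) := by
  have htrace (hp : 2 ≤ p) :
      Algebra.trace K L ((algebraMap K L a * γ + algebraMap K L b) / algebraMap K L d) =
        -(X ^ p - X + C ξ : K[X]).nextCoeff * a / d := by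
    have hγ : IsIntegral K γ := ⟨_, monic_X_pow_sub_X_add_C hp ξ, by simpa using hroot⟩
    have hmin := minpoly_eq_X_pow_sub_X_add_C hp hirr hroot
    have hfin : Module.finrank K L = p := by
      rw [finrank_eq_natDegree_minpoly_of_adjoin_simple_eq_top hγ hgen, hmin,
        natDegree_X_pow_sub_X_add_C hp]
    rw [trace_algebraMap_mul_add_algebraMap_div,
      trace_eq_neg_nextCoeff_minpoly_of_adjoin_simple_eq_top hγ hgen, hmin, hfin, nsmul_eq_mul,
      CharP.cast_eq_zero]
    ring
  refine ⟨fun hp ↦ ?_, fun hp ↦ ?_⟩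
  · rw [htrace (by omega), nextCoeff_X_pow_sub_X_add_C_of_three_le hp]
    ring
  · subst hp
    rw [htrace le_rfl, nextCoeff_X_sq_sub_X_add_C]
    ring

/-- Let `K` be a finite field of characteristic `p`,
`f(X) = X^p - X + ξ ∈ K[X]` irreducible, `γ` a root of `f` in an extension `L = K(γ)`.
For `a, b, d ∈ K` with `d ≠ 0`: if `p ≥ 3` then `Tr_{K(γ)/K}((aγ+b)/d) = 0`, and
if `p = 2` then `Tr_{K(γ)/K}((aγ+b)/d) = a/d`. -/
theorem trace_linear_div_const (p : ℕ) [Fact p.Prime] (K L : Type*) [Field K] [Finite K]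
    [CharP K p] [Field L] [Algebra K L] [FiniteDimensional K L] (ξ : K)
    (hirr : Irreducible (X ^ p - X + C ξ)) (γ : L)
    (hroot : γ ^ p - γ + algebraMap K L ξ = 0)
    (hgen : IntermediateField.adjoin K {γ} = ⊤)
    (a b d : K) (hd : d ≠ 0) :
    (3 ≤ p →
      Algebra.trace K L ((algebraMap K L a * γ + algebraMap K L b) / algebraMap K L d) = 0) ∧
    (p = 2 →
      Algebra.trace K L ((algebraMap K L a * γ + algebraMap K L b) / algebraMap K L d) = a / d) :=
  trace_linear_div_const_general p K L ξ hirr γ hroot hgen a b d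
end

section
/- Let K be a finite field of characteristic p, f(X) = X^p − X + ξ ∈ K[X] irreducible over K, and γ a root of f in an extension of K. Then for any c, d ∈ K with c ≠ 0, the element ξ − (d/c)^p + (d/c) is nonzero and Tr_{K(γ)/K}(1/(γ + d/c)) = (ξ − (d/c)^p + (d/c))^{−1}. -/
/-!
Shifting by `e ∈ K` and Frobenius additivity turn `γ + e` into a root of the Artin–Schreier
polynomial `X ^ p - X + ξ'` with `ξ' = ξ - e ^ p + e`; this is the minimal polynomial of `γ + e`,
so `ξ' ≠ 0` by irreducibility. The minimal polynomial of an inverse is the normalized reversed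
polynomial, so for a generator `x` of `L` one has `Tr (x⁻¹) = -c₁ / c₀` in terms of the
coefficients of the minimal polynomial of `x`, which here gives `Tr ((γ + e)⁻¹) = 1 / ξ'`.
-/

open Polynomial IntermediateField Module

namespace Polynomial

variable {R : Type*} [CommRing R] (p : ℕ)

noncomputable def artinSchreier (a : R) : R[X] := X ^ p - X + C a

variable {p}

theorem artinSchreier_comp_X_sub_C [Fact p.Prime] [CharP R p] (a e : R) :
    (artinSchreier p a).comp (X - C e) = artinSchreier p (a - e ^ p + e) := by
  simp only [artinSchreier, add_comp, sub_comp, pow_comp, X_comp, C_comp, sub_pow_char,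
    ← C_pow, map_add, map_sub]
  ring

theorem coeff_artinSchreier_zero (hp : p ≠ 0) (a : R) : (artinSchreier p a).coeff 0 = a := by
  simp [artinSchreier, Ne.symm hp]

theorem coeff_artinSchreier_one (hp : p ≠ 1) (a : R) : (artinSchreier p a).coeff 1 = -1 := by
  simp [artinSchreier, coeff_X_pow, hp.symm]

section Nontrivial

variable [Nontrivial R]

theorem natDegree_artinSchreier (hp : 1 < p) (a : R) : (artinSchreier p a).natDegree = p := by
  rw [artinSchreier, sub_add, natDegree_sub_eq_left_of_natDegree_lt] <;> simp [hp]

theorem monic_artinSchreier (hp : 1 < p) (a : R) : (artinSchreier p a).Monic := by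
  rw [artinSchreier, sub_add]
  exact monic_X_pow_sub (by rw [degree_X_sub_C]; exact_mod_cast hp)

end Nontrivial

theorem ne_zero_of_irreducible_artinSchreier [IsDomain R] (hp : 1 < p) {a : R}
    (h : Irreducible (artinSchreier p a)) : a ≠ 0 := by
  rintro rfl
  have h1 := degree_eq_one_of_irreducible_of_root h (x := 0)
    (by simp [artinSchreier, (zero_lt_one.trans hp).ne'])
  rw [degree_eq_natDegree h.ne_zero, natDegree_artinSchreier hp] at h1
  exact hp.ne' (by exact_mod_cast h1)

end Polynomial

section Field

variable {K L : Type*} [Field K] [Field L] [Algebra K L]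

theorem IntermediateField.adjoin_simple_inv (x : L) : K⟮x⁻¹⟯ = K⟮x⟯ :=
  le_antisymm (adjoin_simple_le_iff.2 (inv_mem (mem_adjoin_simple_self K x)))
    (adjoin_simple_le_iff.2 (by simpa using inv_mem (mem_adjoin_simple_self K x⁻¹)))

theorem IntermediateField.adjoin_simple_add_algebraMap (x : L) (a : K) :
    K⟮x + algebraMap K L a⟯ = K⟮x⟯ :=
  le_antisymm (adjoin_simple_le_iff.2 (add_mem (mem_adjoin_simple_self K x) (algebraMap_mem _ a)))
    (adjoin_simple_le_iff.2 (by
      simpa using sub_mem (mem_adjoin_simple_self K (x + algebraMap K L a)) (algebraMap_mem _ a)))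

theorem minpoly.inv {x : L} (hx : IsIntegral K x) (hx0 : x ≠ 0) :
    minpoly K x⁻¹ = C ((minpoly K x).coeff 0)⁻¹ * (minpoly K x).reverse := by
  have hc : (minpoly K x).coeff 0 ≠ 0 := coeff_zero_ne_zero hx hx0
  have : Invertible x := invertibleOfNonzero hx0
  refine (unique_of_degree_le_degree_minpoly _ _ ?_ ?_ ?_).symm
  · rw [Monic, leadingCoeff_mul, leadingCoeff_C, reverse_leadingCoeff,
      trailingCoeff_eq_coeff_zero hc, inv_mul_cancel₀ hc]
  · have hrev : Polynomial.aeval x⁻¹ (minpoly K x).reverse = 0 := by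
      rw [aeval_def, ← invOf_eq_inv, eval₂_reverse_eq_zero_iff, ← aeval_def, aeval]
    rw [map_mul, hrev, mul_zero]
  · rw [degree_C_mul (inv_ne_zero hc), degree_eq_natDegree (ne_zero hx.inv),
      ← adjoin.finrank hx.inv, adjoin_simple_inv, adjoin.finrank hx]
    exact degree_le_of_natDegree_le (reverse_natDegree_le _)

theorem Algebra.trace_inv [FiniteDimensional K L] {x : L} (hx0 : x ≠ 0) :
    Algebra.trace K L x⁻¹ =
      finrank K⟮x⟯ L * -((minpoly K x).coeff 1 / (minpoly K x).coeff 0) := by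
  have hx : IsIntegral K x := .of_finite K x
  have hc : (minpoly K x).coeff 0 ≠ 0 := minpoly.coeff_zero_ne_zero hx hx0
  have hdeg : 0 < (minpoly K x).natDegree := minpoly.natDegree_pos hx
  rw [trace_eq_finrank_mul_minpoly_nextCoeff, adjoin_simple_inv, minpoly.inv hx hx0,
    nextCoeff_C_mul, nextCoeff_of_natDegree_pos, coeff_reverse, reverse_natDegree,
    natTrailingDegree_eq_zero.2 (Or.inr hc), Nat.sub_zero, revAt_le (by omega),
    Nat.sub_sub_self hdeg, div_eq_inv_mul]
  rwa [reverse_natDegree, natTrailingDegree_eq_zero.2 (Or.inr hc)]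

end Field

theorem trace_inv_shifted_root_general (p : ℕ) [Fact p.Prime] (K L : Type*) [Field K]
    [CharP K p] [Field L] [Algebra K L] [FiniteDimensional K L] (ξ : K)
    (hirr : Irreducible (X ^ p - X + C ξ)) (γ : L)
    (hroot : γ ^ p - γ + algebraMap K L ξ = 0)
    (hgen : IntermediateField.adjoin K {γ} = ⊤)
    (c d : K) :
    ξ - (d / c) ^ p + d / c ≠ 0 ∧
      Algebra.trace K L (γ + algebraMap K L (d / c))⁻¹ = (ξ - (d / c) ^ p + d / c)⁻¹ := by
  have hp : 1 < p := (Fact.out : p.Prime).one_lt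
  have hp0 : p ≠ 0 := (Fact.out : p.Prime).ne_zero
  set e := d / c
  set ξ' := ξ - e ^ p + e
  have hmin : minpoly K γ = artinSchreier p ξ :=
    (minpoly.eq_of_irreducible_of_monic hirr (by simpa [artinSchreier] using hroot)
      (monic_artinSchreier hp ξ)).symm
  have hmin' : minpoly K (γ + algebraMap K L e) = artinSchreier p ξ' := by
    rw [minpoly.add_algebraMap, hmin, artinSchreier_comp_X_sub_C]
  have hξ' : ξ' ≠ 0 := ne_zero_of_irreducible_artinSchreier hp
    (hmin' ▸ minpoly.irreducible (.of_finite K _))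
  have hγ' : γ + algebraMap K L e ≠ 0 := fun h ↦ hξ' <| by
    rw [← coeff_artinSchreier_zero hp0 ξ', ← hmin']
    exact (minpoly.coeff_zero_eq_zero (.of_finite K _)).2 h
  refine ⟨hξ', ?_⟩
  rw [Algebra.trace_inv hγ', adjoin_simple_add_algebraMap, hgen, IntermediateField.finrank_top,
    hmin', coeff_artinSchreier_one hp.ne', coeff_artinSchreier_zero hp0,
    Nat.cast_one, one_mul, neg_div, neg_neg, one_div]

/-- Let `K` be a finite field of characteristic `p`,
`f(X) = X^p - X + ξ ∈ K[X]` irreducible over `K`, and `γ` a root of `f` with `L = K(γ)`.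
For any `c, d ∈ K` with `c ≠ 0`, the element `ξ - (d/c)^p + d/c` is nonzero and
`Tr_{K(γ)/K}(1/(γ + d/c)) = (ξ - (d/c)^p + d/c)⁻¹`. -/
theorem trace_inv_shifted_root (p : ℕ) [Fact p.Prime] (K L : Type*) [Field K] [Finite K]
    [CharP K p] [Field L] [Algebra K L] [FiniteDimensional K L] (ξ : K)
    (hirr : Irreducible (X ^ p - X + C ξ)) (γ : L)
    (hroot : γ ^ p - γ + algebraMap K L ξ = 0)
    (hgen : IntermediateField.adjoin K {γ} = ⊤)
    (c d : K) (hc : c ≠ 0) :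
    ξ - (d / c) ^ p + d / c ≠ 0 ∧
      Algebra.trace K L (γ + algebraMap K L (d / c))⁻¹ = (ξ - (d / c) ^ p + d / c)⁻¹ :=
  trace_inv_shifted_root_general p K L ξ hirr γ hroot hgen c d
end

section
/- Let K be a finite field of characteristic p, f(X) = X^p − X + ξ ∈ K[X] irreducible over K, and γ a root of f in an extension field. For any a, b, c, d ∈ K with c ≠ 0, one has Tr_{K(γ)/K}((aγ + b)/(cγ + d)) = (bc − ad)/(c²(ξ − (d/c)^p + d/c)). -/
open Polynomial

theorem aux_mon {K : Type*} [Field K] (p : ℕ) (q : K[X]) (hq : q.degree < p) :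
    (X ^ p + q : K[X]).Monic ∧ (X ^ p + q : K[X]).natDegree = p := by
  have hd : q.degree < (X ^ p : K[X]).degree := by rwa [degree_X_pow]
  refine ⟨(monic_X_pow p).add_of_left hd, ?_⟩
  have := degree_add_eq_left_of_degree_lt hd
  rw [degree_X_pow] at this
  exact natDegree_eq_of_degree_eq_some this

/-- Let `K` be a finite field of characteristic `p`,
`f(X) = X^p - X + ξ ∈ K[X]` irreducible over `K`, and `γ` a root of `f` with `L = K(γ)`.
For any `a, b, c, d ∈ K` with `c ≠ 0`,
`Tr_{K(γ)/K}((aγ+b)/(cγ+d)) = (bc - ad)/(c²(ξ - (d/c)^p + d/c))`. -/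
theorem trace_moebius_of_root (p : ℕ) [Fact p.Prime] (K L : Type*) [Field K] [Finite K]
    [CharP K p] [Field L] [Algebra K L] [FiniteDimensional K L] (ξ : K)
    (hirr : Irreducible (X ^ p - X + C ξ)) (γ : L)
    (hroot : γ ^ p - γ + algebraMap K L ξ = 0)
    (hgen : IntermediateField.adjoin K {γ} = ⊤)
    (a b c d : K) (hc : c ≠ 0) :
    Algebra.trace K L
        ((algebraMap K L a * γ + algebraMap K L b) / (algebraMap K L c * γ + algebraMap K L d)) =
      (b * c - a * d) / (c ^ 2 * (ξ - (d / c) ^ p + d / c)) := by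
  have hp2 : 2 ≤ p := (Fact.out : p.Prime).two_le
  have hinj := (algebraMap K L).injective
  haveI : CharP L p := charP_of_injective_algebraMap hinj p
  -- monicity/degree of X^p - X + C s for any s
  have hdeg : ∀ s : K, (X ^ p - X + C s : K[X]).Monic ∧ (X ^ p - X + C s : K[X]).natDegree = p := by
    intro s
    have h : (X ^ p - X + C s : K[X]) = X ^ p + (C s - X) := by ring
    rw [h]
    refine aux_mon p _ ?_
    refine lt_of_le_of_lt (degree_sub_le _ _) ?_
    simp only [max_lt_iff, degree_X]
    exact ⟨lt_of_le_of_lt degree_C_le (by exact_mod_cast Nat.lt_of_lt_of_le two_pos hp2),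
      by exact_mod_cast Nat.lt_of_lt_of_le Nat.one_lt_two hp2⟩
  -- finrank K L = p
  have hintγ : IsIntegral K γ := .of_finite K γ
  have hminγ : minpoly K γ = X ^ p - X + C ξ := by
    refine (minpoly.eq_of_irreducible_of_monic hirr ?_ (hdeg ξ).1).symm
    simp only [map_add, map_sub, map_pow, aeval_X, aeval_C]
    exact hroot
  have hrank : ∀ x : L, IntermediateField.adjoin K {x} = ⊤ →
      Module.finrank K L = (minpoly K x).natDegree := by
    intro x hx
    rw [← IntermediateField.adjoin.finrank (IsIntegral.of_finite K x)]
    exact (((IntermediateField.equivOfEq hx).trans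
      IntermediateField.topEquiv).toLinearEquiv.finrank_eq).symm
  have hfin : Module.finrank K L = p := by rw [hrank γ hgen, hminγ, (hdeg ξ).2]
  -- set up δ and ξ'
  set e : K := d / c with he
  set ξ' : K := ξ - e ^ p + e with hxi'
  set δ : L := γ + algebraMap K L e with hδdef
  have hδroot : δ ^ p - δ + algebraMap K L ξ' = 0 := by
    have hfrob : δ ^ p = γ ^ p + (algebraMap K L e) ^ p := add_pow_char _ _ _
    rw [hδdef, hxi', hfrob, map_add, map_sub, map_pow]
    linear_combination hroot
  -- adjoin δ = ⊤
  have hgenδ : IntermediateField.adjoin K {δ} = ⊤ := by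
    rw [eq_top_iff, ← hgen]
    rw [IntermediateField.adjoin_le_iff]
    intro x hx
    rw [Set.mem_singleton_iff] at hx
    subst hx
    have h1 : δ ∈ IntermediateField.adjoin K {δ} := IntermediateField.mem_adjoin_simple_self K δ
    have h2 : algebraMap K L e ∈ IntermediateField.adjoin K {δ} :=
      (IntermediateField.adjoin K {δ}).algebraMap_mem e
    have := sub_mem h1 h2
    simpa [hδdef] using this
  -- minpoly of δ
  have hintδ : IsIntegral K δ := .of_finite K δ
  have hminδ : minpoly K δ = X ^ p - X + C ξ' := by
    refine Polynomial.eq_of_dvd_of_natDegree_le_of_leadingCoeff ?_ ?_ ?_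
    · refine minpoly.dvd K δ ?_
      simp only [map_add, map_sub, map_pow, aeval_X, aeval_C]
      exact hδroot
    · rw [(hdeg ξ').2, ← hrank δ hgenδ, hfin]
    · rw [(minpoly.monic hintδ).leadingCoeff, ((hdeg ξ').1).leadingCoeff]
  -- ξ' ≠ 0
  have hξ' : ξ' ≠ 0 := by
    intro h
    have hi := minpoly.irreducible hintδ
    rw [hminδ, h, map_zero, add_zero] at hi
    have hfact : (X ^ p - X : K[X]) = X * (X ^ (p - 1) - 1) := by
      rw [mul_sub, mul_one, ← pow_succ']
      congr 2
      omega
    rcases hi.isUnit_or_isUnit hfact with hu | hu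
    · exact Polynomial.not_isUnit_X hu
    · have := Polynomial.natDegree_eq_zero_of_isUnit hu
      rw [show (1 : K[X]) = C 1 by simp, Polynomial.natDegree_X_pow_sub_C] at this
      omega
  have hδ0 : δ ≠ 0 := by
    intro h
    rw [h, zero_pow (by omega), sub_zero, zero_add] at hδroot
    exact hξ' (hinj (by simpa using hδroot))
  -- μ = δ⁻¹
  set μ : L := δ⁻¹ with hμdef
  have hμ0 : μ ≠ 0 := inv_ne_zero hδ0
  have hgenμ : IntermediateField.adjoin K {μ} = ⊤ := by
    rw [eq_top_iff, ← hgenδ, IntermediateField.adjoin_le_iff]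
    intro x hx
    rw [Set.mem_singleton_iff] at hx
    subst hx
    have h1 : μ ∈ IntermediateField.adjoin K {μ} := IntermediateField.mem_adjoin_simple_self K μ
    have := inv_mem (x := μ) h1
    simpa [hμdef] using this
  have hintμ : IsIntegral K μ := .of_finite K μ
  -- minpoly of μ
  set g : K[X] := X ^ p - C ξ'⁻¹ * X ^ (p - 1) + C ξ'⁻¹ with hgdef
  have hgdeg : g.Monic ∧ g.natDegree = p := by
    have h : g = X ^ p + (C ξ'⁻¹ - C ξ'⁻¹ * X ^ (p - 1)) := by rw [hgdef]; ring
    rw [h]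
    refine aux_mon p _ ?_
    refine lt_of_le_of_lt (degree_sub_le _ _) ?_
    rw [max_lt_iff]
    constructor
    · exact lt_of_le_of_lt degree_C_le (by exact_mod_cast Nat.lt_of_lt_of_le two_pos hp2)
    · refine lt_of_le_of_lt (degree_mul_le _ _) ?_
      refine lt_of_le_of_lt (add_le_add degree_C_le (degree_X_pow _).le) ?_
      simp only [zero_add]
      exact_mod_cast (by omega : p - 1 < p)
  have hμroot : (aeval μ) g = 0 := by
    rw [hgdef]
    simp only [map_add, map_sub, map_pow, map_mul, aeval_X, aeval_C]
    set t : L := algebraMap K L ξ'⁻¹ with htdef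
    have hξL : algebraMap K L ξ' ≠ 0 := by simpa using hξ'
    have ht1 : t * algebraMap K L ξ' = 1 := by
      rw [htdef, map_inv₀, inv_mul_cancel₀ hξL]
    have hppow : δ ^ p = δ ^ (p - 1) * δ := by
      rw [← pow_succ]
      congr 1
      omega
    have e1 : δ ^ p * μ ^ p = 1 := by
      rw [hμdef, ← mul_pow, mul_inv_cancel₀ hδ0, one_pow]
    have e2 : δ ^ p * μ ^ (p - 1) = δ := by
      rw [hμdef, hppow, mul_comm (δ ^ (p - 1)) δ, mul_assoc, ← mul_pow,
        mul_inv_cancel₀ hδ0, one_pow, mul_one]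
    have key : δ ^ p * (μ ^ p - t * μ ^ (p - 1) + t) = 0 := by
      calc δ ^ p * (μ ^ p - t * μ ^ (p - 1) + t)
          = δ ^ p * μ ^ p - t * (δ ^ p * μ ^ (p - 1)) + t * δ ^ p := by ring
        _ = 1 - t * δ + t * δ ^ p := by rw [e1, e2]
        _ = t * (δ ^ p - δ + algebraMap K L ξ') + (1 - t * algebraMap K L ξ') := by ring
        _ = 0 := by rw [hδroot, ht1, mul_zero, sub_self, add_zero]
    exact (mul_eq_zero.mp key).resolve_left (pow_ne_zero _ hδ0)
  have hminμ : minpoly K μ = g := by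
    refine Polynomial.eq_of_dvd_of_natDegree_le_of_leadingCoeff (minpoly.dvd K μ hμroot) ?_ ?_
    · rw [hgdeg.2, ← hrank μ hgenμ, hfin]
    · rw [(minpoly.monic hintμ).leadingCoeff, hgdeg.1.leadingCoeff]
  -- trace of μ
  have hnc : g.nextCoeff = -ξ'⁻¹ := by
    rw [nextCoeff_of_natDegree_pos (by rw [hgdeg.2]; omega), hgdeg.2, hgdef]
    simp only [coeff_add, coeff_sub, coeff_X_pow, coeff_C_mul, coeff_C]
    rw [if_neg (by omega : ¬(p - 1 = p)), if_neg (by omega : ¬(p - 1 = 0))]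
    simp
  let pb : PowerBasis K L := (IntermediateField.adjoin.powerBasis hintμ).map
    ((IntermediateField.equivOfEq hgenμ).trans IntermediateField.topEquiv)
  have hpbgen : pb.gen = μ := rfl
  have htrμ : Algebra.trace K L μ = ξ'⁻¹ := by
    rw [← hpbgen, pb.trace_gen_eq_nextCoeff_minpoly, hpbgen, hminμ, hnc, neg_neg]
  -- rewrite the argument
  have hc' : algebraMap K L c ≠ 0 := by simpa using hc
  have harg : (algebraMap K L a * γ + algebraMap K L b) / (algebraMap K L c * γ + algebraMap K L d)
      = algebraMap K L (a / c) + algebraMap K L ((b * c - a * d) / c ^ 2) * μ := by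
    have hγ : γ = δ - algebraMap K L e := by rw [hδdef]; ring
    have hden : algebraMap K L c * γ + algebraMap K L d = algebraMap K L c * δ := by
      have hce : c * e = d := by rw [he]; field_simp
      rw [hδdef, mul_add, ← map_mul, hce]
    rw [hden, div_eq_iff (mul_ne_zero hc' hδ0), hγ, hμdef, he]
    simp only [map_div₀, map_sub, map_mul, map_pow]
    field_simp
    ring
  rw [harg, map_add]
  have h1 : Algebra.trace K L (algebraMap K L (a / c)) = 0 := by
    rw [Algebra.trace_algebraMap, hfin, nsmul_eq_mul, CharP.cast_eq_zero K p, zero_mul]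
  have h2 : Algebra.trace K L (algebraMap K L ((b * c - a * d) / c ^ 2) * μ)
      = (b * c - a * d) / c ^ 2 * ξ'⁻¹ := by
    rw [← Algebra.smul_def, map_smul, htrμ, smul_eq_mul]
  rw [h1, h2, zero_add, ← div_eq_mul_inv, div_div]
end

section
/- Let K be a finite field of characteristic p and ξ ∈ K with Tr_K(ξ) ≠ 0. Let G(X) = 1/(X^p − X + ξ) viewed as a self-map of K̄ ∪ {∞}. Then for every positive integer n, G^{(n)}(∞) ≠ ∞; equivalently, ∞ is not a periodic point of G. -/
/-!
The forward orbit of `∞` enters `K` at `G ∞ = 0` and never leaves it. Indeed, Frobenius is an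
`𝔽_p`-automorphism of `K`, so `z ^ p - z` has trace zero for `z ∈ K`; hence `z ^ p - z + ξ ≠ 0`
and `G z = (z ^ p - z + ξ)⁻¹ ∈ K`.
-/

open scoped Classical

theorem Algebra.trace_pow_card {F L : Type*} [Field F] [Fintype F] [Field L] [Algebra F L]
    [Algebra.IsAlgebraic F L] (x : L) :
    Algebra.trace F L (x ^ Fintype.card F) = Algebra.trace F L x :=
  Algebra.trace_eq_of_algEquiv (FiniteField.frobeniusAlgEquivOfAlgebraic F L) x

theorem Algebra.pow_card_sub_self_add_ne_zero {F L : Type*} [Field F] [Fintype F] [Field L]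
    [Algebra F L] [Algebra.IsAlgebraic F L] {ξ : L} (hξ : Algebra.trace F L ξ ≠ 0) (z : L) :
    z ^ Fintype.card F - z + ξ ≠ 0 := by
  intro hz
  apply hξ
  rw [show ξ = z - z ^ Fintype.card F by linear_combination hz, map_sub, trace_pow_card,
    sub_self]

theorem infinity_not_periodic_general (p : ℕ) [Fact p.Prime] (K : Type*) [Field K] [Finite K]
    [Algebra (ZMod p) K] (ξ : K) (hξ : Algebra.trace (ZMod p) K ξ ≠ 0)
    (G : Option (AlgebraicClosure K) → Option (AlgebraicClosure K))
    (hGinf : G none = some 0)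
    (hG : ∀ x : AlgebraicClosure K,
      G (some x) = if x ^ p - x + algebraMap K (AlgebraicClosure K) ξ = 0 then none
        else some (x ^ p - x + algebraMap K (AlgebraicClosure K) ξ)⁻¹) :
    ∀ n : ℕ, 1 ≤ n → G^[n] none ≠ none := by
  have hroot (z : K) : z ^ p - z + ξ ≠ 0 := by
    simpa [ZMod.card] using Algebra.pow_card_sub_self_add_ne_zero hξ z
  let S : Set (Option (AlgebraicClosure K)) := Set.range fun z : K => some (algebraMap K _ z)
  have hG_mapsTo : Set.MapsTo G S S := by
    rintro _ ⟨z, rfl⟩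
    have hcast : algebraMap K (AlgebraicClosure K) z ^ p - algebraMap K _ z + algebraMap K _ ξ =
        algebraMap K _ (z ^ p - z + ξ) := by simp
    rw [hG, hcast, if_neg ((map_ne_zero _).2 (hroot z))]
    exact ⟨(z ^ p - z + ξ)⁻¹, by simp⟩
  intro n hn
  obtain ⟨m, rfl⟩ := Nat.exists_eq_add_of_le' hn
  obtain ⟨z, hz⟩ := hG_mapsTo.iterate m (show G none ∈ S from ⟨0, by simp [hGinf]⟩)
  rw [Function.iterate_succ_apply, ← hz]
  exact Option.some_ne_none _

/-- Let `K` be a finite field of characteristic `p` and `ξ ∈ K` with nonzero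
absolute trace. View `G(X) = 1/(X^p - X + ξ)` as a self-map of `K̄ ∪ {∞}` (modelled as
`Option K̄`, with `none` playing the role of `∞`, `G(∞) = 0`, and `G(x) = ∞` when
`g(x) = 0`). Then `G^[n](∞) ≠ ∞` for every `n ≥ 1`; i.e. `∞` is not a periodic point. -/
theorem infinity_not_periodic (p : ℕ) [Fact p.Prime] (K : Type*) [Field K] [Finite K]
    [CharP K p] [Algebra (ZMod p) K] (ξ : K) (hξ : Algebra.trace (ZMod p) K ξ ≠ 0)
    (G : Option (AlgebraicClosure K) → Option (AlgebraicClosure K))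
    (hGinf : G none = some 0)
    (hG : ∀ x : AlgebraicClosure K,
      G (some x) = if x ^ p - x + algebraMap K (AlgebraicClosure K) ξ = 0 then none
        else some (x ^ p - x + algebraMap K (AlgebraicClosure K) ξ)⁻¹) :
    ∀ n : ℕ, 1 ≤ n → G^[n] none ≠ none :=
  infinity_not_periodic_general p K ξ hξ G hGinf hG
end

section
/- Let q = p^e and ξ ∈ F_q with Tr_{F_q}(ξ) ≠ 0. Define sequences in F_q by a_1 = ξ, c_1 = 1, d_1 = 0; a_2 = −1, c_2 = ξ, d_2 = −1; and for n ≥ 2: a_{n+1} = −a_n d_n, c_{n+1} = c_n²(ξ − (c_n^{−1}d_n)^p + c_n^{−1}d_n), d_{n+1} = −c_n². Then c_n ≠ 0 for every positive integer n. -/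
/-- The sequences `(a_n, c_n, d_n)` of equation (1.1): `a_1 = ξ, c_1 = 1, d_1 = 0`;
`a_2 = -1, c_2 = ξ, d_2 = -1`; and for `n ≥ 2`, `a_{n+1} = -a_n d_n`,
`c_{n+1} = c_n²(ξ - (c_n⁻¹d_n)^p + c_n⁻¹d_n)`, `d_{n+1} = -c_n²`. -/
noncomputable def asSeq (p : ℕ) {K : Type*} [Field K] (ξ : K) : ℕ → K × K × K
  | 0 => (0, 0, 0)
  | 1 => (ξ, 1, 0)
  | 2 => (-1, ξ, -1)
  | n + 3 =>
    let s := asSeq p ξ (n + 2)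
    (-s.1 * s.2.2, s.2.1 ^ 2 * (ξ - (s.2.1⁻¹ * s.2.2) ^ p + s.2.1⁻¹ * s.2.2), -s.2.1 ^ 2)

/-!
Since `c_{n+1} = c_n² (ξ - β^p + β)` with `β = c_n⁻¹ d_n`, induction reduces the claim to
`ξ ≠ β^p - β`. The trace is invariant under Frobenius, so it vanishes on every `α^p - α`,
but not on `ξ`.
-/

section Trace

variable {K L : Type*} [Field K] [Fintype K] [Field L] [Finite L] [Algebra K L]

theorem Algebra.trace_pow_card_s9 (x : L) :
    Algebra.trace K L (x ^ Fintype.card K) = Algebra.trace K L x :=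
  Algebra.trace_eq_of_algEquiv (FiniteField.frobeniusAlgEquivOfAlgebraic K L) x

theorem sub_pow_card_add_ne_zero_of_trace_ne_zero {ξ : L} (hξ : Algebra.trace K L ξ ≠ 0)
    (α : L) : ξ - α ^ Fintype.card K + α ≠ 0 := by
  intro h
  apply hξ
  rw [show ξ = α ^ Fintype.card K - α by linear_combination h, map_sub,
    Algebra.trace_pow_card_s9, sub_self]

end Trace

section asSeq

variable {p : ℕ} {K : Type*} [Field K] {ξ : K}

theorem asSeq_one_c : (asSeq p ξ 1).2.1 = 1 := rfl

theorem asSeq_two_c : (asSeq p ξ 2).2.1 = ξ := rfl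

theorem asSeq_add_three_c (n : ℕ) :
    (asSeq p ξ (n + 3)).2.1 =
      (asSeq p ξ (n + 2)).2.1 ^ 2 * (ξ - ((asSeq p ξ (n + 2)).2.1⁻¹ * (asSeq p ξ (n + 2)).2.2) ^ p
        + (asSeq p ξ (n + 2)).2.1⁻¹ * (asSeq p ξ (n + 2)).2.2) := by
  rw [asSeq]

theorem asSeq_c_ne_zero_of_forall_ne_zero (hξ : ξ ≠ 0) (h : ∀ α : K, ξ - α ^ p + α ≠ 0)
    {n : ℕ} (hn : 1 ≤ n) : (asSeq p ξ n).2.1 ≠ 0 := by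
  have h_add_two : ∀ m, (asSeq p ξ (m + 2)).2.1 ≠ 0 := by
    intro m
    induction m with
    | zero => rwa [asSeq_two_c]
    | succ m ih => rw [asSeq_add_three_c]; exact mul_ne_zero (pow_ne_zero 2 ih) (h _)
  obtain _ | _ | m := n
  · omega
  · simp [asSeq_one_c]
  · exact h_add_two m

end asSeq

theorem asSeq_c_ne_zero_general (p e : ℕ) [Fact p.Prime] (ξ : GaloisField p e)
    (hξ : Algebra.trace (ZMod p) (GaloisField p e) ξ ≠ 0) :
    ∀ n : ℕ, 1 ≤ n → (asSeq p ξ n).2.1 ≠ 0 := by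
  have h_AS : ∀ α, ξ - α ^ p + α ≠ 0 := by
    simpa only [ZMod.card] using sub_pow_card_add_ne_zero_of_trace_ne_zero hξ
  have hξ₀ : ξ ≠ 0 := by
    simpa [zero_pow (Fact.out : p.Prime).ne_zero] using h_AS 0
  exact fun n hn => asSeq_c_ne_zero_of_forall_ne_zero hξ₀ h_AS hn

/-- For `q = p^e` and `ξ ∈ F_q` of nonzero absolute trace, the sequence `c_n`
defined by the recurrence (1.1) satisfies `c_n ≠ 0` for every positive integer `n`. -/
theorem asSeq_c_ne_zero (p e : ℕ) [Fact p.Prime] (he : 0 < e) (ξ : GaloisField p e)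
    (hξ : Algebra.trace (ZMod p) (GaloisField p e) ξ ≠ 0) :
    ∀ n : ℕ, 1 ≤ n → (asSeq p ξ n).2.1 ≠ 0 :=
  asSeq_c_ne_zero_general p e ξ hξ
end

section
/- Let p be prime, q = p^e with p ∤ e, and ξ ∈ F_p nonzero viewed in F_q. With the sequences a_n, c_n defined by the recurrence of Theorem 1.2 from ξ, one has a_n c_n^{−1} = ξ for n = 1 and a_n c_n^{−1} = −ξ^{3−2n} for n ≥ 2; consequently Tr_{F_q}(a_n c_n^{−1}) equals eξ if n = 1 and −eξ^{3−2n} if n ≥ 2, which is nonzero for all n. -/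
/-- Let `q = p^e` with `p ∤ e`, and `ξ ∈ F_p` nonzero, viewed in `F_q`. With the
sequences of Theorem 1.2 from `ξ`: `a_1 c_1⁻¹ = ξ`, `a_n c_n⁻¹ = -ξ^(3-2n)` for `n ≥ 2`;
consequently `Tr_{F_q}(a_n c_n⁻¹) = eξ` for `n = 1` and `= -eξ^(3-2n)` for `n ≥ 2`, which is
nonzero for all `n ≥ 1`. -/
theorem asSeq_ratio_and_trace (p e : ℕ) [Fact p.Prime] (he : 0 < e) (hpe : ¬ p ∣ e)
    (ξ : ZMod p) (hξ : ξ ≠ 0) :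
    (asSeq p (algebraMap (ZMod p) (GaloisField p e) ξ) 1).1 *
        ((asSeq p (algebraMap (ZMod p) (GaloisField p e) ξ) 1).2.1)⁻¹ =
      algebraMap (ZMod p) (GaloisField p e) ξ ∧
    (∀ n : ℕ, 2 ≤ n →
      (asSeq p (algebraMap (ZMod p) (GaloisField p e) ξ) n).1 *
          ((asSeq p (algebraMap (ZMod p) (GaloisField p e) ξ) n).2.1)⁻¹ =
        -algebraMap (ZMod p) (GaloisField p e) (ξ ^ ((3 : ℤ) - 2 * n))) ∧
    Algebra.trace (ZMod p) (GaloisField p e)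
        ((asSeq p (algebraMap (ZMod p) (GaloisField p e) ξ) 1).1 *
          ((asSeq p (algebraMap (ZMod p) (GaloisField p e) ξ) 1).2.1)⁻¹) = (e : ZMod p) * ξ ∧
    (∀ n : ℕ, 2 ≤ n →
      Algebra.trace (ZMod p) (GaloisField p e)
          ((asSeq p (algebraMap (ZMod p) (GaloisField p e) ξ) n).1 *
            ((asSeq p (algebraMap (ZMod p) (GaloisField p e) ξ) n).2.1)⁻¹) =
        -(e : ZMod p) * ξ ^ ((3 : ℤ) - 2 * n)) ∧
    (∀ n : ℕ, 1 ≤ n →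
      Algebra.trace (ZMod p) (GaloisField p e)
          ((asSeq p (algebraMap (ZMod p) (GaloisField p e) ξ) n).1 *
            ((asSeq p (algebraMap (ZMod p) (GaloisField p e) ξ) n).2.1)⁻¹) ≠ 0) := by
  set K := GaloisField p e with hK
  set φ := algebraMap (ZMod p) K with hφ
  have hξ' : φ ξ ≠ 0 := by simp [hφ, map_eq_zero, hξ]
  -- closed form for the sequence
  have key : ∀ n : ℕ, asSeq p (φ ξ) (n + 2) =
      (φ (-ξ ^ ((2:ℤ) ^ (n+1) - 2 * n - 2)), φ (ξ ^ ((2:ℤ) ^ (n+1) - 1)),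
        φ (-ξ ^ ((2:ℤ) ^ (n+1) - 2))) := by
    intro n
    induction n with
    | zero => simp [asSeq]
    | succ m ih =>
      show asSeq p (φ ξ) (m + 3) = _
      simp only [asSeq]
      rw [ih]
      set A : ℤ := (2:ℤ) ^ (m+1) - 2 * m - 2
      set C : ℤ := (2:ℤ) ^ (m+1) - 1
      set D : ℤ := (2:ℤ) ^ (m+1) - 2
      have hfrob : ((φ (ξ ^ C))⁻¹ * φ (-ξ ^ D)) ^ p = (φ (ξ ^ C))⁻¹ * φ (-ξ ^ D) := by
        rw [← map_inv₀, ← map_mul, ← map_pow, ZMod.pow_card]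
      refine Prod.ext ?_ (Prod.ext ?_ ?_)
      · show -φ (-ξ ^ A) * φ (-ξ ^ D) = φ (-ξ ^ ((2:ℤ) ^ (m+1+1) - 2 * (m+1) - 2))
        rw [← map_neg, ← map_mul]
        congr 1
        rw [show (2:ℤ) ^ (m+1+1) - 2 * (m+1) - 2 = A + D by simp only [A, D]; push_cast; ring,
          zpow_add₀ hξ]
        ring
      · show φ (ξ ^ C) ^ 2 * (φ ξ - _ + _) = φ (ξ ^ ((2:ℤ) ^ (m+1+1) - 1))
        rw [hfrob, sub_add_cancel, ← map_pow, ← map_mul]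
        congr 1
        rw [show (2:ℤ) ^ (m+1+1) - 1 = C + C + 1 by simp only [C]; ring,
          zpow_add₀ hξ, zpow_add₀ hξ, zpow_one]
        ring
      · show -φ (ξ ^ C) ^ 2 = φ (-ξ ^ ((2:ℤ) ^ (m+1+1) - 2))
        rw [← map_pow, ← map_neg]
        congr 1
        rw [show (2:ℤ) ^ (m+1+1) - 2 = C + C by simp only [C]; ring, zpow_add₀ hξ]
        ring
  have h1 : (asSeq p (φ ξ) 1).1 * ((asSeq p (φ ξ) 1).2.1)⁻¹ = φ ξ := by
    simp [asSeq]
  have h2 : ∀ n : ℕ, 2 ≤ n → (asSeq p (φ ξ) n).1 * ((asSeq p (φ ξ) n).2.1)⁻¹ =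
      -φ (ξ ^ ((3:ℤ) - 2 * n)) := by
    intro n hn
    obtain ⟨m, rfl⟩ : ∃ m, n = m + 2 := ⟨n - 2, by omega⟩
    rw [key m]
    dsimp only
    rw [← map_inv₀, ← map_mul, ← map_neg]
    congr 1
    rw [← zpow_neg, show (3:ℤ) - 2 * ((m + 2 : ℕ) : ℤ) =
        ((2:ℤ) ^ (m+1) - 2 * m - 2) + (-((2:ℤ) ^ (m+1) - 1)) by push_cast; ring,
      zpow_add₀ hξ]
    ring
  have hfr : Module.finrank (ZMod p) K = e := GaloisField.finrank p he.ne'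
  have htr : ∀ x : ZMod p, Algebra.trace (ZMod p) K (φ x) = (e : ZMod p) * x := by
    intro x
    rw [hφ, Algebra.trace_algebraMap, hfr, nsmul_eq_mul]
  have he' : (e : ZMod p) ≠ 0 := by
    rwa [Ne, ZMod.natCast_eq_zero_iff]
  have ht1 : Algebra.trace (ZMod p) K ((asSeq p (φ ξ) 1).1 * ((asSeq p (φ ξ) 1).2.1)⁻¹) =
      (e : ZMod p) * ξ := by rw [h1, htr]
  have ht2 : ∀ n : ℕ, 2 ≤ n →
      Algebra.trace (ZMod p) K ((asSeq p (φ ξ) n).1 * ((asSeq p (φ ξ) n).2.1)⁻¹) =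
      -(e : ZMod p) * ξ ^ ((3:ℤ) - 2 * n) := by
    intro n hn
    rw [h2 n hn, map_neg, htr]
    ring
  refine ⟨h1, h2, ht1, ht2, ?_⟩
  intro n hn
  rcases eq_or_lt_of_le hn with h | h
  · rw [← h, ht1]
    exact mul_ne_zero he' hξ
  · rw [ht2 n h]
    exact mul_ne_zero (neg_ne_zero.mpr he') (zpow_ne_zero _ hξ)
end

section
/- Let p = 3, q = 9, and let w ∈ F_9 be a root of X² + 2X + 2 (a primitive element of F_9). Then the polynomial X³ − X + w is inversely stable over F_9: every denominator of every iterate of 1/(X³ − X + w) is irreducible over F_9, and they are pairwise distinct. -/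
open Polynomial

/-- The iterates of the rational map `X ↦ 1/g(X)`. -/
noncomputable def invIter {K : Type*} [Field K] (g : Polynomial K) : ℕ → RatFunc K
  | 0 => RatFunc.X
  | n + 1 => (Polynomial.aeval (invIter g n) g)⁻¹

/-- A polynomial `g` is inversely stable over `K` if the denominators (in lowest terms) of all
the iterates of `1/g(X)` are irreducible over `K` and pairwise distinct. -/
def InverselyStable {K : Type*} [Field K] (g : Polynomial K) : Prop :=
  (∀ n : ℕ, 1 ≤ n → Irreducible (invIter g n).denom) ∧
    ∀ m n : ℕ, 1 ≤ m → 1 ≤ n → m ≠ n → (invIter g m).denom ≠ (invIter g n).denom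

namespace InvStabF9

abbrev F9 := GaloisField 3 2

noncomputable abbrev Om := AlgebraicClosure F9

noncomputable instance : Fintype F9 := Fintype.ofFinite _

instance : CharP Om 3 := charP_of_injective_algebraMap (algebraMap F9 Om).injective 3

lemma card_F9 : Fintype.card F9 = 9 := by
  rw [← Nat.card_eq_fintype_card, GaloisField.card 3 2 (by norm_num)]; norm_num

lemma pow_card (c : F9) : c ^ 9 = c := by
  calc c ^ 9 = c ^ Fintype.card F9 := by rw [card_F9]
  _ = c := FiniteField.pow_card c

lemma h3 : (3 : F9) = 0 := by
  have := CharP.cast_eq_zero F9 3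
  norm_num at this ⊢; exact_mod_cast this

lemma h3Om : (3 : Om) = 0 := by
  have := CharP.cast_eq_zero Om 3
  norm_num at this ⊢; exact_mod_cast this

lemma two_ne : (2 : F9) ≠ 0 := by
  intro h
  have h2 : ((2:ℕ) : F9) = 0 := by exact_mod_cast h
  rw [CharP.cast_eq_zero_iff F9 3 2] at h2
  norm_num at h2

lemma one_ne : (1 : F9) ≠ 0 := one_ne_zero

lemma two_neOm : (2 : Om) ≠ 0 := by
  intro h
  have h2 : ((2:ℕ) : Om) = 0 := by exact_mod_cast h
  rw [CharP.cast_eq_zero_iff Om 3 2] at h2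
  norm_num at h2

section Wfacts
variable {w : F9} (hw : w ^ 2 + 2 * w + 2 = 0)

include hw

lemma w_ne_zero : w ≠ 0 := by
  intro h; rw [h] at hw; norm_num at hw
  exact two_ne (by linear_combination hw)

lemma w_ne_one : w ≠ 1 := by
  intro h; rw [h] at hw
  exact two_ne (by linear_combination hw - h3)

lemma w_ne_two : w ≠ 2 := by
  intro h; rw [h] at hw
  exact one_ne (by linear_combination hw - 3*h3)

lemma w_cube : w + w ^ 3 = 1 := by
  linear_combination (norm := ring1) (-2 + w) * hw + (1 + w) * h3

end Wfacts


abbrev Quad := F9 × F9 × F9 × F9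

noncomputable def stepA (q : Quad) : F9 := (q.1 * q.2.2.2 - q.2.1 * q.2.2.1) * q.2.2.1
noncomputable def stepG (w : F9) (q : Quad) : F9 :=
  q.2.2.2^3 - q.2.2.1^2 * q.2.2.2 - w * q.2.2.1^3
noncomputable def stepD (q : Quad) : F9 := q.2.2.1^3
noncomputable def stepQ (w : F9) (q : Quad) : Quad := (stepA q, 0, stepG w q, stepD q)
noncomputable def bse (w : F9) (q : Quad) : F9 := stepA q / stepG w q

noncomputable def Q0 (w : F9) : Quad := (0, 1, 1, 0)
noncomputable def Q1 (w : F9) : Quad := (2, 0, 2*w, 1)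
noncomputable def Q2 (w : F9) : Quad := (w, 0, 2+2*w, 2+w)
noncomputable def Q3 (w : F9) : Quad := (2+2*w, 0, 1+w, 1+w)
noncomputable def Q4 (w : F9) : Quad := (1+w, 0, 1+2*w, 2+2*w)
noncomputable def Q5 (w : F9) : Quad := (1+2*w, 0, 1, w)
noncomputable def Q6 (w : F9) : Quad := (2, 0, 1, 1)

noncomputable def qs (w : F9) : ℕ → Quad
  | 0 => Q0 w
  | k+1 => stepQ w (qs w k)

lemma qs_succ (w : F9) (k : ℕ) : qs w (k+1) = stepQ w (qs w k) := rfl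

section QuadLemmas
variable {w : F9} (hw : w ^ 2 + 2 * w + 2 = 0)
include hw

lemma stepQ_Q0 : stepQ w (Q0 w) = Q1 w := by
  have e1 : stepA (Q0 w) = (2 : F9) := by
    simp only [stepA, Q0]; linear_combination (norm := ring1) 0 * hw + (-1) * h3
  have e3 : stepG w (Q0 w) = (2*w : F9) := by
    simp only [stepG, Q0]; linear_combination (norm := ring1) 0 * hw + (-w) * h3
  have e4 : stepD (Q0 w) = (1 : F9) := by
    simp only [stepD, Q0]; linear_combination (norm := ring1) 0 * hw + 0 * h3
  show (stepA (Q0 w), (0:F9), stepG w (Q0 w), stepD (Q0 w)) = Q1 w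
  rw [e1, e3, e4]; rfl
lemma stepQ_Q1 : stepQ w (Q1 w) = Q2 w := by
  have e1 : stepA (Q1 w) = (w : F9) := by
    simp only [stepA, Q1]; linear_combination (norm := ring1) 0 * hw + (w) * h3
  have e3 : stepG w (Q1 w) = (2+2*w : F9) := by
    simp only [stepG, Q1]; linear_combination (norm := ring1) (-20 + (16)*w + (-8)*w^2) * hw + (13 + (2)*w) * h3
  have e4 : stepD (Q1 w) = (2+w : F9) := by
    simp only [stepD, Q1]; linear_combination (norm := ring1) (-16 + (8)*w) * hw + (10 + (5)*w) * h3
  show (stepA (Q1 w), (0:F9), stepG w (Q1 w), stepD (Q1 w)) = Q2 w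
  rw [e1, e3, e4]; rfl
lemma stepQ_Q2 : stepQ w (Q2 w) = Q3 w := by
  have e1 : stepA (Q2 w) = (2+2*w : F9) := by
    simp only [stepA, Q2]; linear_combination (norm := ring1) (2 + (2)*w) * hw + (-2 + (-2)*w) * h3
  have e3 : stepG w (Q2 w) = (1+w : F9) := by
    simp only [stepG, Q2]; linear_combination (norm := ring1) (4 + (-11)*w + (-8)*w^2) * hw + (-3 - w) * h3
  have e4 : stepD (Q2 w) = (1+w : F9) := by
    simp only [stepD, Q2]; linear_combination (norm := ring1) (8 + (8)*w) * hw + (-3 + (-3)*w) * h3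
  show (stepA (Q2 w), (0:F9), stepG w (Q2 w), stepD (Q2 w)) = Q3 w
  rw [e1, e3, e4]; rfl
lemma stepQ_Q3 : stepQ w (Q3 w) = Q4 w := by
  have e1 : stepA (Q3 w) = (1+w : F9) := by
    simp only [stepA, Q3]; linear_combination (norm := ring1) (2 + (2)*w) * hw + (-1 - w) * h3
  have e3 : stepG w (Q3 w) = (1+2*w : F9) := by
    simp only [stepG, Q3]; linear_combination (norm := ring1) (1 - w - w^2) * hw + (-1 - w) * h3
  have e4 : stepD (Q3 w) = (2+2*w : F9) := by
    simp only [stepD, Q3]; linear_combination (norm := ring1) (1 + w) * hw + (-1 - w) * h3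
  show (stepA (Q3 w), (0:F9), stepG w (Q3 w), stepD (Q3 w)) = Q4 w
  rw [e1, e3, e4]; rfl
lemma stepQ_Q4 : stepQ w (Q4 w) = Q5 w := by
  have e1 : stepA (Q4 w) = (1+2*w : F9) := by
    simp only [stepA, Q4]; linear_combination (norm := ring1) (2 + (4)*w) * hw + (-1 + (-2)*w) * h3
  have e3 : stepG w (Q4 w) = (1 : F9) := by
    simp only [stepG, Q4]; linear_combination (norm := ring1) (10 + (4)*w + (-8)*w^2) * hw + (-5 + (-5)*w) * h3
  have e4 : stepD (Q4 w) = (w : F9) := by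
    simp only [stepD, Q4]; linear_combination (norm := ring1) (-4 + (8)*w) * hw + (3 - w) * h3
  show (stepA (Q4 w), (0:F9), stepG w (Q4 w), stepD (Q4 w)) = Q5 w
  rw [e1, e3, e4]; rfl
lemma stepQ_Q5 : stepQ w (Q5 w) = Q6 w := by
  have e1 : stepA (Q5 w) = (2 : F9) := by
    simp only [stepA, Q5]; linear_combination (norm := ring1) (2) * hw + (-2 - w) * h3
  have e3 : stepG w (Q5 w) = (1 : F9) := by
    simp only [stepG, Q5]; linear_combination (norm := ring1) (-2 + w) * hw + (1) * h3
  have e4 : stepD (Q5 w) = (1 : F9) := by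
    simp only [stepD, Q5]; linear_combination (norm := ring1) 0 * hw + 0 * h3
  show (stepA (Q5 w), (0:F9), stepG w (Q5 w), stepD (Q5 w)) = Q6 w
  rw [e1, e3, e4]; rfl
lemma stepQ_Q6 : stepQ w (Q6 w) = Q1 w := by
  have e1 : stepA (Q6 w) = (2 : F9) := by
    simp only [stepA, Q6]; linear_combination (norm := ring1) 0 * hw + 0 * h3
  have e3 : stepG w (Q6 w) = (2*w : F9) := by
    simp only [stepG, Q6]; linear_combination (norm := ring1) 0 * hw + (-w) * h3
  have e4 : stepD (Q6 w) = (1 : F9) := by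
    simp only [stepD, Q6]; linear_combination (norm := ring1) 0 * hw + 0 * h3
  show (stepA (Q6 w), (0:F9), stepG w (Q6 w), stepD (Q6 w)) = Q1 w
  rw [e1, e3, e4]; rfl

lemma qs_mem (k : ℕ) : qs w k = Q0 w ∨ qs w k = Q1 w ∨ qs w k = Q2 w ∨ qs w k = Q3 w ∨
    qs w k = Q4 w ∨ qs w k = Q5 w ∨ qs w k = Q6 w := by
  induction k with
  | zero => exact Or.inl rfl
  | succ k ih =>
    rw [qs_succ]
    rcases ih with h|h|h|h|h|h|h <;> rw [h]
    · exact Or.inr (Or.inl (stepQ_Q0 hw))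
    · exact Or.inr (Or.inr (Or.inl (stepQ_Q1 hw)))
    · exact Or.inr (Or.inr (Or.inr (Or.inl (stepQ_Q2 hw))))
    · exact Or.inr (Or.inr (Or.inr (Or.inr (Or.inl (stepQ_Q3 hw)))))
    · exact Or.inr (Or.inr (Or.inr (Or.inr (Or.inr (Or.inl (stepQ_Q4 hw))))))
    · exact Or.inr (Or.inr (Or.inr (Or.inr (Or.inr (Or.inr (stepQ_Q5 hw))))))
    · exact Or.inr (Or.inl (stepQ_Q6 hw))

lemma ne_1w : (1:F9) + w ≠ 0 := fun h =>
  w_ne_two hw (by linear_combination h - h3)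
lemma ne_12w : (1:F9) + 2*w ≠ 0 := fun h =>
  w_ne_one hw (by linear_combination w * h3 - h)
lemma ne_22w : (2:F9) + 2*w ≠ 0 := by
  have h2 : (2:F9)+2*w = 2*(1+w) := by ring
  rw [h2]; exact mul_ne_zero two_ne (ne_1w hw)
lemma ne_2w : 2*w ≠ 0 := mul_ne_zero two_ne (w_ne_zero hw)

lemma gam_ne (k : ℕ) : (qs w k).2.2.1 ≠ 0 := by
  rcases qs_mem hw k with h|h|h|h|h|h|h <;> rw [h]
  · exact one_ne
  · exact ne_2w hw
  · exact ne_22w hw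
  · exact ne_1w hw
  · exact ne_12w hw
  · exact one_ne
  · exact one_ne

lemma stepG_ne (k : ℕ) : stepG w (qs w k) ≠ 0 := by
  have h : stepG w (qs w k) = (qs w (k+1)).2.2.1 := rfl
  rw [h]; exact gam_ne hw (k+1)

lemma bse_Q0 : bse w (Q0 w) = 2+w := by
  have eg : stepG w (Q0 w) = (2*w : F9) := by
    simp only [stepG, Q0]; linear_combination (norm := ring1) 0 * hw + (-w) * h3
  have hg : stepG w (Q0 w) ≠ 0 := by rw [eg]; exact ne_2w hw
  rw [bse, div_eq_iff hg]
  simp only [stepA, stepG, Q0]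
  linear_combination (norm := ring1) (1) * hw + (-1) * h3
lemma bse_Q1 : bse w (Q1 w) = 1+2*w := by
  have eg : stepG w (Q1 w) = (2+2*w : F9) := by
    simp only [stepG, Q1]; linear_combination (norm := ring1) (-20 + (16)*w + (-8)*w^2) * hw + (13 + (2)*w) * h3
  have hg : stepG w (Q1 w) ≠ 0 := by rw [eg]; exact ne_22w hw
  rw [bse, div_eq_iff hg]
  simp only [stepA, stepG, Q1]
  linear_combination (norm := ring1) (4 + (24)*w + (-24)*w^2 + (16)*w^3) * hw + (-3 + (-18)*w) * h3
lemma bse_Q2 : bse w (Q2 w) = 2 := by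
  have eg : stepG w (Q2 w) = (1+w : F9) := by
    simp only [stepG, Q2]; linear_combination (norm := ring1) (4 + (-11)*w + (-8)*w^2) * hw + (-3 - w) * h3
  have hg : stepG w (Q2 w) ≠ 0 := by rw [eg]; exact ne_1w hw
  rw [bse, div_eq_iff hg]
  simp only [stepA, stepG, Q2]
  linear_combination (norm := ring1) (-6 + (24)*w + (16)*w^2) * hw + (4) * h3
lemma bse_Q3 : bse w (Q3 w) = 2+w := by
  have eg : stepG w (Q3 w) = (1+2*w : F9) := by
    simp only [stepG, Q3]; linear_combination (norm := ring1) (1 - w - w^2) * hw + (-1 - w) * h3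
  have hg : stepG w (Q3 w) ≠ 0 := by rw [eg]; exact ne_12w hw
  rw [bse, div_eq_iff hg]
  simp only [stepA, stepG, Q3]
  linear_combination (norm := ring1) (1 + (3)*w + (3)*w^2 + w^3) * hw + 0 * h3
lemma bse_Q4 : bse w (Q4 w) = 1+2*w := by
  have eg : stepG w (Q4 w) = (1 : F9) := by
    simp only [stepG, Q4]; linear_combination (norm := ring1) (10 + (4)*w + (-8)*w^2) * hw + (-5 + (-5)*w) * h3
  have hg : stepG w (Q4 w) ≠ 0 := by rw [eg]; exact one_ne
  rw [bse, div_eq_iff hg]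
  simp only [stepA, stepG, Q4]
  linear_combination (norm := ring1) (22 + (-20)*w + (16)*w^3) * hw + (-16 + (-7)*w) * h3
lemma bse_Q5 : bse w (Q5 w) = 2 := by
  have eg : stepG w (Q5 w) = (1 : F9) := by
    simp only [stepG, Q5]; linear_combination (norm := ring1) (-2 + w) * hw + (1) * h3
  have hg : stepG w (Q5 w) ≠ 0 := by rw [eg]; exact one_ne
  rw [bse, div_eq_iff hg]
  simp only [stepA, stepG, Q5]
  linear_combination (norm := ring1) (6 + (-2)*w) * hw + (-4 - w) * h3
lemma bse_Q6 : bse w (Q6 w) = 2+w := by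
  have eg : stepG w (Q6 w) = (2*w : F9) := by
    simp only [stepG, Q6]; linear_combination (norm := ring1) 0 * hw + (-w) * h3
  have hg : stepG w (Q6 w) ≠ 0 := by rw [eg]; exact ne_2w hw
  rw [bse, div_eq_iff hg]
  simp only [stepA, stepG, Q6]
  linear_combination (norm := ring1) (1) * hw + 0 * h3
lemma tau_2pw : (2+w : F9) + (2+w)^3 ≠ 0 := by
  have h : (2+w : F9) + (2+w)^3 = 2 := by linear_combination (norm := ring1) (4 + w) * hw + (w) * h3
  rw [h]; exact two_ne
lemma tau_1p2mw : (1+2*w : F9) + (1+2*w)^3 ≠ 0 := by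
  have h : (1+2*w : F9) + (1+2*w)^3 = 1 := by linear_combination (norm := ring1) (-4 + (8)*w) * hw + (3) * h3
  rw [h]; exact one_ne
lemma tau_2 : (2 : F9) + (2)^3 ≠ 0 := by
  have h : (2 : F9) + (2)^3 = 1 := by linear_combination (norm := ring1) 0 * hw + (3) * h3
  rw [h]; exact one_ne

lemma tau_ne (k : ℕ) : bse w (qs w k) + (bse w (qs w k))^3 ≠ 0 := by
  rcases qs_mem hw k with h|h|h|h|h|h|h <;> rw [h]
  · rw [bse_Q0 hw]; exact tau_2pw hw
  · rw [bse_Q1 hw]; exact tau_1p2mw hw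
  · rw [bse_Q2 hw]; exact tau_2 hw
  · rw [bse_Q3 hw]; exact tau_2pw hw
  · rw [bse_Q4 hw]; exact tau_1p2mw hw
  · rw [bse_Q5 hw]; exact tau_2 hw
  · rw [bse_Q6 hw]; exact tau_2pw hw

end QuadLemmas

/-! ### Iterated Frobenius on the algebraic closure -/

noncomputable def Pn : ℕ → Om →+* Om
  | 0 => RingHom.id Om
  | n+1 => (frobenius Om 3).comp (Pn n)

lemma Pn_zero (x : Om) : Pn 0 x = x := rfl

lemma Pn_succ (n : ℕ) (x : Om) : Pn (n+1) x = (Pn n x)^3 := rfl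

lemma Pn_add (m n : ℕ) (x : Om) : Pn (m + n) x = Pn m (Pn n x) := by
  induction m with
  | zero => simp [Pn_zero, Nat.zero_add]
  | succ m ih =>
    have h1 : m + 1 + n = (m + n) + 1 := by ring
    rw [h1, Pn_succ, Pn_succ, ih]

lemma Pn_two_cast (c : F9) : Pn 2 (algebraMap F9 Om c) = algebraMap F9 Om c := by
  have h : Pn 2 (algebraMap F9 Om c) = ((algebraMap F9 Om c)^3)^3 := rfl
  rw [h, ← pow_mul]
  norm_num
  rw [← map_pow, pow_card]

lemma Pn_even_cast (i : ℕ) (c : F9) : Pn (2*i) (algebraMap F9 Om c) = algebraMap F9 Om c := by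
  induction i with
  | zero => rfl
  | succ i ih =>
    have h1 : 2*(i+1) = 2*i + 2 := by ring
    rw [h1, Pn_add, Pn_two_cast, ih]

/-- The Möbius value attached to a quadruple. -/
noncomputable def mobq (q : Quad) (u : Om) : Om :=
  (algebraMap F9 Om q.1 * u + algebraMap F9 Om q.2.1) /
    (algebraMap F9 Om q.2.2.1 * u + algebraMap F9 Om q.2.2.2)

lemma Pn_even_mobq (i : ℕ) (q : Quad) (u : Om) :
    Pn (2*i) (mobq q u) = mobq q (Pn (2*i) u) := by
  rw [mobq, mobq, map_div₀, map_add, map_add, map_mul, map_mul,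
    Pn_even_cast, Pn_even_cast, Pn_even_cast, Pn_even_cast]

/-- Partial Frobenius sums. -/
noncomputable def SS (N : ℕ) (y : Om) : Om := ∑ i ∈ Finset.range N, Pn (2*i) y

lemma SS_add_arg (N : ℕ) (y z : Om) : SS N (y + z) = SS N y + SS N z := by
  rw [SS, SS, SS, ← Finset.sum_add_distrib]
  exact Finset.sum_congr rfl fun i _ => map_add _ _ _

lemma SS_triple (N : ℕ) (y : Om) :
    SS (3*N) y = SS N y + SS N (Pn (2*N) y) + SS N (Pn (2*N) (Pn (2*N) y)) := by
  have h1 : 3*N = N + (N + N) := by ring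
  have e1 : ∑ x ∈ Finset.range N, Pn (2*(N+x)) y = SS N (Pn (2*N) y) := by
    rw [SS]; exact Finset.sum_congr rfl fun i _ => by rw [← Pn_add]; congr 1; ring
  have e2 : ∑ x ∈ Finset.range N, Pn (2*(N+(N+x))) y = SS N (Pn (2*N) (Pn (2*N) y)) := by
    rw [SS]; exact Finset.sum_congr rfl fun i _ => by rw [← Pn_add, ← Pn_add]; congr 1; ring
  rw [h1, SS, Finset.sum_range_add, Finset.sum_range_add, e1, e2, ← add_assoc]
  rfl

lemma SS_cast (N : ℕ) (c : F9) : SS N (algebraMap F9 Om c) = N * algebraMap F9 Om c := by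
  rw [SS]
  rw [Finset.sum_congr rfl fun i _ => Pn_even_cast i c, Finset.sum_const, Finset.card_range,
    nsmul_eq_mul]
/-! ### The key Artin–Schreier Möbius-sum identities -/

lemma key (A B C D W u v z : Om) (hu : u^3 = u + z - W) (hz : v * z = 1)
    (h1 : C*u + D ≠ 0) (h2 : C*(u+1) + D ≠ 0) (h2' : C*(u+2) + D ≠ 0)
    (hM : (D^3 - C^2*D - W*C^3)*v + C^3 ≠ 0) :
    (A*u+B)/(C*u+D) + (A*(u+1)+B)/(C*(u+1)+D) + (A*(u+2)+B)/(C*(u+2)+D)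
      = ((A*D - B*C)*C)*v / ((D^3 - C^2*D - W*C^3)*v + C^3) := by
  have h3 : (3 : Om) = 0 := h3Om
  rw [div_add_div _ _ h1 h2, div_add_div _ _ (mul_ne_zero h1 h2) h2',
      div_eq_div_iff (mul_ne_zero (mul_ne_zero h1 h2) h2') hM]
  linear_combination (norm := ring1) (B*C^5*v + (3)*A*C^2*D^3*v + (-4)*A*C^4*D*v + (3)*A*C^5 + (-3)*A*C^5*W*v) * hu + (B*C^5 + (3)*A*C^2*D^3 + (-4)*A*C^4*D + (-3)*A*C^5*W) * hz + (B*D^5*v + (2)*B*C*D^4*v + (2)*B*C*D^4*u*v + (2)*B*C^2*D^3*u*v + B*C^2*D^3*u^2*v + B*C^3*D^2 - B*C^3*D^2*v - B*C^3*D^2*u*v - B*C^3*D^2*W*v + (2)*B*C^4*D + (2)*B*C^4*D*u + (-2)*B*C^4*D*W*v + (-2)*B*C^4*D*W*u*v + B*C^5 + (2)*B*C^5*u + B*C^5*u*v + B*C^5*u^2 + B*C^5*u^2*v - B*C^5*W*v + (-2)*B*C^5*W*u*v - B*C^5*W*u^2*v + A*D^5*v + A*D^5*u*v + A*C*D^4*v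 + (4)*A*C*D^4*u*v + (2)*A*C*D^4*u^2*v + A*C^2*D^3 + (-2)*A*C^2*D^3*v + A*C^2*D^3*u*v + (3)*A*C^2*D^3*u^2*v - A*C^2*D^3*W*v + A*C^3*D^2 + (-2)*A*C^3*D^2*v + A*C^3*D^2*u + (-6)*A*C^3*D^2*u*v + (-3)*A*C^3*D^2*u^2*v - A*C^3*D^2*W*v - A*C^3*D^2*W*u*v + (4)*A*C^4*D*u + (-4)*A*C^4*D*u*v + (2)*A*C^4*D*u^2 + (-4)*A*C^4*D*u^2*v + (-4)*A*C^4*D*W*u*v + (-2)*A*C^4*D*W*u^2*v + A*C^5*z + (3)*A*C^5*u + (3)*A*C^5*u^2 + (-2)*A*C^5*W + (-3)*A*C^5*W*u*v + (-3)*A*C^5*W*u^2*v + A*C^5*W^2*v) * h3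

lemma key0 (A B C D W u : Om) (hu : u^3 = u - W)
    (h1 : C*u + D ≠ 0) (h2 : C*(u+1) + D ≠ 0) (h2' : C*(u+2) + D ≠ 0)
    (hM : D^3 - C^2*D - W*C^3 ≠ 0) :
    (A*u+B)/(C*u+D) + (A*(u+1)+B)/(C*(u+1)+D) + (A*(u+2)+B)/(C*(u+2)+D)
      = ((A*D - B*C)*C) / (D^3 - C^2*D - W*C^3) := by
  have h3 : (3 : Om) = 0 := h3Om
  rw [div_add_div _ _ h1 h2, div_add_div _ _ (mul_ne_zero h1 h2) h2',
      div_eq_div_iff (mul_ne_zero (mul_ne_zero h1 h2) h2') hM]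
  linear_combination (norm := ring1) (B*C^5 + (3)*A*C^2*D^3 + (-4)*A*C^4*D + (-3)*A*C^5*W) * hu + (B*D^5 + (2)*B*C*D^4 + (2)*B*C*D^4*u + (2)*B*C^2*D^3*u + B*C^2*D^3*u^2 - B*C^3*D^2 - B*C^3*D^2*u - B*C^3*D^2*W + (-2)*B*C^4*D*W + (-2)*B*C^4*D*W*u + B*C^5*u + B*C^5*u^2 - B*C^5*W + (-2)*B*C^5*W*u - B*C^5*W*u^2 + A*D^5 + A*D^5*u + A*C*D^4 + (4)*A*C*D^4*u + (2)*A*C*D^4*u^2 + (-2)*A*C^2*D^3 + A*C^2*D^3*u + (3)*A*C^2*D^3*u^2 - A*C^2*D^3*W + (-2)*A*C^3*D^2 + (-6)*A*C^3*D^2*u + (-3)*A*C^3*D^2*u^2 - A*C^3*D^2*W - A*C^3*D^2*W*u + (-4)*A*C^4*D*u + (-4)*A*C^4*D*u^2 + (-4)*A*C^4*D*W*u + (-2)*A*C^4*D*W*u^2 + (-3)*A*C^5*W*u + (-3)*A*C^5*W*u^2 + A*C^5*W^2) * h3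
/-! ### The Artin–Schreier chain -/

lemma exists_cube (a : Om) : ∃ x : Om, x^3 = x + a := by
  obtain ⟨x, hx⟩ := IsAlgClosed.exists_root (X^3 - (X + C a) : Om[X]) (by
    have h1 : (X + C a : Om[X]).degree < (X^3 : Om[X]).degree := by
      rw [Polynomial.degree_X_pow, Polynomial.degree_X_add_C]
      exact_mod_cast (by norm_num : (1:ℕ) < 3)
    rw [Polynomial.degree_sub_eq_left_of_degree_lt h1, Polynomial.degree_X_pow]
    intro h
    exact (by norm_num : (3:ℕ) ≠ 0) (by exact_mod_cast h))
  refine ⟨x, ?_⟩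
  have h2 := hx
  rw [Polynomial.IsRoot, Polynomial.eval_sub, Polynomial.eval_add, Polynomial.eval_pow,
    Polynomial.eval_X, Polynomial.eval_C, sub_eq_zero] at h2
  exact h2

noncomputable def Wc (w : F9) : Om := algebraMap F9 Om w

noncomputable def xs (w : F9) : ℕ → Om
  | 0 => Classical.choose (exists_cube (-(Wc w)))
  | j+1 => Classical.choose (exists_cube ((xs w j)⁻¹ - Wc w))

lemma xs_zero (w : F9) : (xs w 0)^3 = xs w 0 - Wc w := by
  have h := Classical.choose_spec (exists_cube (-(Wc w)))
  rw [show xs w 0 = Classical.choose (exists_cube (-(Wc w))) from rfl]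
  rw [h]; ring

lemma xs_succ (w : F9) (j : ℕ) :
    (xs w (j+1))^3 = xs w (j+1) + ((xs w j)⁻¹ - Wc w) :=
  Classical.choose_spec (exists_cube ((xs w j)⁻¹ - Wc w))

/-- The main inductive invariant: the `3^l`-th 9-power Frobenius moves `xs w l` by
a nonzero element of `F_3`. -/
def Inv (w : F9) (l : ℕ) : Prop :=
  Pn (2*3^l) (xs w l) = xs w l + 1 ∨ Pn (2*3^l) (xs w l) = xs w l + 2

lemma inv_fix {w : F9} {l : ℕ} (h : Inv w l) : Pn (2*3^(l+1)) (xs w l) = xs w l := by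
  have hh : 2*3^(l+1) = 2*3^l + (2*3^l + 2*3^l) := by ring
  obtain ⟨c, hc1, hc2, hc3⟩ : ∃ c : Om, Pn (2*3^l) (xs w l) = xs w l + c ∧
      Pn (2*3^l) c = c ∧ c + c + c = 0 := by
    rcases h with h|h
    · exact ⟨1, h, map_one _, by linear_combination h3Om⟩
    · exact ⟨2, h, map_ofNat _ 2, by linear_combination 2*h3Om⟩
  have s1 : Pn (2*3^l) (xs w l + c) = xs w l + c + c := by rw [map_add, hc2, hc1]
  have s2 : Pn (2*3^l) (xs w l + c + c) = xs w l + c + c + c := by rw [map_add, hc2, s1]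
  calc Pn (2*3^(l+1)) (xs w l) = Pn (2*3^l) (Pn (2*3^l) (Pn (2*3^l) (xs w l))) := by
        rw [hh, Pn_add, Pn_add]
  _ = Pn (2*3^l) (Pn (2*3^l) (xs w l + c)) := by rw [hc1]
  _ = Pn (2*3^l) (xs w l + c + c) := by rw [s1]
  _ = xs w l + c + c + c := s2
  _ = xs w l := by linear_combination hc3

lemma inv_notmem {w : F9} {l : ℕ} (h : Inv w l) :
    xs w l ∉ Set.range (algebraMap F9 Om) := by
  rintro ⟨c, hc⟩
  have hfix : Pn (2*3^l) (xs w l) = xs w l := by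
    rw [← hc]; exact Pn_even_cast (3^l) c
  rcases h with h|h <;> rw [hfix] at h
  · exact one_ne_zero (by linear_combination -h : (1:Om) = 0)
  · exact two_neOm (by linear_combination -h)

lemma notmem_ne_zero {u : Om} (h : u ∉ Set.range (algebraMap F9 Om)) : u ≠ 0 :=
  fun h0 => h ⟨0, by rw [map_zero, h0]⟩

lemma lin_ne {a : F9} (ha : a ≠ 0) {u : Om} (h : u ∉ Set.range (algebraMap F9 Om)) (b : F9) :
    algebraMap F9 Om a * u + algebraMap F9 Om b ≠ 0 := by
  intro h0
  refine h ⟨-b/a, ?_⟩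
  have haO : algebraMap F9 Om a ≠ 0 := by
    simpa using (map_ne_zero_iff _ (algebraMap F9 Om).injective).mpr ha
  rw [map_div₀, map_neg]
  field_simp
  linear_combination -h0
lemma den_ne3 {γ δ : F9} (hγ : γ ≠ 0) {u : Om} (hnm : u ∉ Set.range (algebraMap F9 Om)) :
    (algebraMap F9 Om γ * u + algebraMap F9 Om δ ≠ 0) ∧
    (algebraMap F9 Om γ * (u+1) + algebraMap F9 Om δ ≠ 0) ∧
    (algebraMap F9 Om γ * (u+2) + algebraMap F9 Om δ ≠ 0) := by
  refine ⟨lin_ne hγ hnm δ, ?_, ?_⟩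
  · have e : algebraMap F9 Om γ * (u+1) + algebraMap F9 Om δ
        = algebraMap F9 Om γ * u + algebraMap F9 Om (γ + δ) := by
      rw [map_add]; ring
    rw [e]; exact lin_ne hγ hnm _
  · have e : algebraMap F9 Om γ * (u+2) + algebraMap F9 Om δ
        = algebraMap F9 Om γ * u + algebraMap F9 Om (2*γ + δ) := by
      rw [map_add, map_mul, map_ofNat]; ring
    rw [e]; exact lin_ne hγ hnm _

lemma cast_stepA (w : F9) (q : Quad) : algebraMap F9 Om (stepA q) =
    (algebraMap F9 Om q.1 * algebraMap F9 Om q.2.2.2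
      - algebraMap F9 Om q.2.1 * algebraMap F9 Om q.2.2.1) * algebraMap F9 Om q.2.2.1 := by
  rw [stepA, map_mul, map_sub, map_mul, map_mul]

lemma cast_stepG (w : F9) (q : Quad) : algebraMap F9 Om (stepG w q) =
    (algebraMap F9 Om q.2.2.2)^3 - (algebraMap F9 Om q.2.2.1)^2 * algebraMap F9 Om q.2.2.2
      - Wc w * (algebraMap F9 Om q.2.2.1)^3 := by
  rw [stepG, map_sub, map_sub, map_pow, map_mul, map_pow, map_mul, map_pow, Wc]

/-- The pointwise three-term sum over a Frobenius orbit, rearranged. -/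
lemma orbit_sum {w : F9} {l : ℕ} (hInv : Inv w l) (q : Quad) :
    mobq q (xs w l) + Pn (2*3^l) (mobq q (xs w l))
      + Pn (2*3^l) (Pn (2*3^l) (mobq q (xs w l)))
    = mobq q (xs w l) + mobq q (xs w l + 1) + mobq q (xs w l + 2) := by
  have hm : ∀ y : Om, Pn (2*3^l) (mobq q y) = mobq q (Pn (2*3^l) y) :=
    fun y => Pn_even_mobq (3^l) q y
  rcases hInv with h|h
  · have s1 : Pn (2*3^l) (mobq q (xs w l)) = mobq q (xs w l + 1) := by rw [hm, h]
    have s2 : Pn (2*3^l) (Pn (2*3^l) (mobq q (xs w l))) = mobq q (xs w l + 1 + 1) := by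
      rw [s1, hm, map_add, map_one, h]
    have e : xs w l + 1 + 1 = xs w l + 2 := by ring
    rw [s2, s1, e]
  · have s1 : Pn (2*3^l) (mobq q (xs w l)) = mobq q (xs w l + 2) := by rw [hm, h]
    have s2 : Pn (2*3^l) (Pn (2*3^l) (mobq q (xs w l))) = mobq q (xs w l + 2 + 2) := by
      rw [s1, hm, map_add, map_ofNat, h]
    have e : xs w l + 2 + 2 = xs w l + 1 := by linear_combination h3Om
    rw [s2, s1, e]; ring

lemma desc {w : F9} (hw : w^2+2*w+2 = 0) :
    ∀ l : ℕ, (∀ l' ≤ l, Inv w l') → ∀ k : ℕ,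
      SS (3^(l+1)) (mobq (qs w k) (xs w l)) = algebraMap F9 Om (bse w (qs w (k+l))) := by
  intro l
  induction l with
  | zero =>
    intro hInv k
    have hInv0 : Inv w 0 := hInv 0 le_rfl
    have hnm : xs w 0 ∉ Set.range (algebraMap F9 Om) := inv_notmem hInv0
    obtain ⟨hd1, hd2, hd3⟩ := den_ne3 (δ := (qs w k).2.2.2) (gam_ne hw k) hnm
    have hGne : algebraMap F9 Om (stepG w (qs w k)) ≠ 0 :=
      (map_ne_zero_iff _ (algebraMap F9 Om).injective).mpr (stepG_ne hw k)
    have hM : (algebraMap F9 Om (qs w k).2.2.2)^3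
        - (algebraMap F9 Om (qs w k).2.2.1)^2 * algebraMap F9 Om (qs w k).2.2.2
        - Wc w * (algebraMap F9 Om (qs w k).2.2.1)^3 ≠ 0 := by
      rw [← cast_stepG w]; exact hGne
    have hu : (xs w 0)^3 = xs w 0 - Wc w := xs_zero w
    have hss : SS 3 (mobq (qs w k) (xs w 0)) = mobq (qs w k) (xs w 0)
        + Pn 2 (mobq (qs w k) (xs w 0)) + Pn 4 (mobq (qs w k) (xs w 0)) := by
      rw [SS, Finset.sum_range_succ, Finset.sum_range_succ, Finset.sum_range_one]
      norm_num [Pn_zero]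
    have hss2 : SS 3 (mobq (qs w k) (xs w 0)) = mobq (qs w k) (xs w 0)
        + mobq (qs w k) (xs w 0 + 1) + mobq (qs w k) (xs w 0 + 2) := by
      rw [hss]
      have e4 : Pn 4 (mobq (qs w k) (xs w 0)) =
          Pn (2*3^0) (Pn (2*3^0) (mobq (qs w k) (xs w 0))) := by
        rw [← Pn_add]; norm_num
      have e2 : Pn 2 (mobq (qs w k) (xs w 0)) =
          Pn (2*3^0) (mobq (qs w k) (xs w 0)) := by norm_num
      rw [e2, e4, orbit_sum hInv0]
    have hkey := key0 (algebraMap F9 Om (qs w k).1) (algebraMap F9 Om (qs w k).2.1)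
      (algebraMap F9 Om (qs w k).2.2.1) (algebraMap F9 Om (qs w k).2.2.2)
      (Wc w) (xs w 0) hu hd1 hd2 hd3 hM
    show SS (3^(0+1)) (mobq (qs w k) (xs w 0)) = _
    rw [show (3:ℕ)^(0+1) = 3 from by norm_num, hss2]
    rw [show mobq (qs w k) (xs w 0) = (algebraMap F9 Om (qs w k).1 * (xs w 0)
        + algebraMap F9 Om (qs w k).2.1) / (algebraMap F9 Om (qs w k).2.2.1 * (xs w 0)
        + algebraMap F9 Om (qs w k).2.2.2) from rfl]
    rw [show mobq (qs w k) (xs w 0 + 1) = (algebraMap F9 Om (qs w k).1 * (xs w 0 + 1)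
        + algebraMap F9 Om (qs w k).2.1) / (algebraMap F9 Om (qs w k).2.2.1 * (xs w 0 + 1)
        + algebraMap F9 Om (qs w k).2.2.2) from rfl]
    rw [show mobq (qs w k) (xs w 0 + 2) = (algebraMap F9 Om (qs w k).1 * (xs w 0 + 2)
        + algebraMap F9 Om (qs w k).2.1) / (algebraMap F9 Om (qs w k).2.2.1 * (xs w 0 + 2)
        + algebraMap F9 Om (qs w k).2.2.2) from rfl]
    rw [hkey, Nat.add_zero, bse, map_div₀, cast_stepA w, cast_stepG w]
  | succ l ihl =>
    intro hInv k
    have hInvl : Inv w l := hInv l (Nat.le_succ l)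
    have hInvl1 : Inv w (l+1) := hInv (l+1) le_rfl
    have hnm : xs w (l+1) ∉ Set.range (algebraMap F9 Om) := inv_notmem hInvl1
    have hnmv : xs w l ∉ Set.range (algebraMap F9 Om) := inv_notmem hInvl
    have hvne : xs w l ≠ 0 := notmem_ne_zero hnmv
    obtain ⟨hd1, hd2, hd3⟩ := den_ne3 (δ := (qs w k).2.2.2) (gam_ne hw k) hnm
    have hGne : stepG w (qs w k) ≠ 0 := stepG_ne hw k
    have hM : ((algebraMap F9 Om (qs w k).2.2.2)^3
        - (algebraMap F9 Om (qs w k).2.2.1)^2 * algebraMap F9 Om (qs w k).2.2.2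
        - Wc w * (algebraMap F9 Om (qs w k).2.2.1)^3) * (xs w l)
        + (algebraMap F9 Om (qs w k).2.2.1)^3 ≠ 0 := by
      rw [← cast_stepG w, ← map_pow]
      exact lin_ne hGne hnmv _
    have hu : (xs w (l+1))^3 = xs w (l+1) + (xs w l)⁻¹ - Wc w := by
      rw [xs_succ]; ring
    have hz : xs w l * (xs w l)⁻¹ = 1 := mul_inv_cancel₀ hvne
    have hkey := key (algebraMap F9 Om (qs w k).1) (algebraMap F9 Om (qs w k).2.1)
      (algebraMap F9 Om (qs w k).2.2.1) (algebraMap F9 Om (qs w k).2.2.2)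
      (Wc w) (xs w (l+1)) (xs w l) (xs w l)⁻¹ hu hz hd1 hd2 hd3 hM
    have harg : mobq (qs w k) (xs w (l+1)) + mobq (qs w k) (xs w (l+1) + 1)
        + mobq (qs w k) (xs w (l+1) + 2) = mobq (qs w (k+1)) (xs w l) := by
      rw [show mobq (qs w k) (xs w (l+1)) = (algebraMap F9 Om (qs w k).1 * (xs w (l+1))
          + algebraMap F9 Om (qs w k).2.1) / (algebraMap F9 Om (qs w k).2.2.1 * (xs w (l+1))
          + algebraMap F9 Om (qs w k).2.2.2) from rfl]
      rw [show mobq (qs w k) (xs w (l+1) + 1) = (algebraMap F9 Om (qs w k).1 * (xs w (l+1) + 1)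
          + algebraMap F9 Om (qs w k).2.1) / (algebraMap F9 Om (qs w k).2.2.1 * (xs w (l+1) + 1)
          + algebraMap F9 Om (qs w k).2.2.2) from rfl]
      rw [show mobq (qs w k) (xs w (l+1) + 2) = (algebraMap F9 Om (qs w k).1 * (xs w (l+1) + 2)
          + algebraMap F9 Om (qs w k).2.1) / (algebraMap F9 Om (qs w k).2.2.1 * (xs w (l+1) + 2)
          + algebraMap F9 Om (qs w k).2.2.2) from rfl]
      rw [hkey, qs_succ]
      rw [show mobq (stepQ w (qs w k)) (xs w l) = (algebraMap F9 Om (stepA (qs w k)) * (xs w l)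
          + algebraMap F9 Om (0:F9)) / (algebraMap F9 Om (stepG w (qs w k)) * (xs w l)
          + algebraMap F9 Om (stepD (qs w k))) from rfl]
      rw [map_zero, add_zero, cast_stepA w, cast_stepG w,
        show algebraMap F9 Om (stepD (qs w k)) = (algebraMap F9 Om (qs w k).2.2.1)^3 from by
          rw [stepD, map_pow]]
    have hsplit : SS (3^(l+1+1)) (mobq (qs w k) (xs w (l+1)))
        = SS (3^(l+1)) (mobq (qs w (k+1)) (xs w l)) := by
      rw [show (3:ℕ)^(l+1+1) = 3*3^(l+1) from by ring, SS_triple,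
        ← SS_add_arg, ← SS_add_arg, orbit_sum hInvl1, harg]
    rw [hsplit, ihl (fun l' hl' => hInv l' (Nat.le_succ_of_le hl')) (k+1),
      show k + 1 + l = k + (l+1) from by omega]
lemma SS_sub_arg (N : ℕ) (y z : Om) : SS N (y - z) = SS N y - SS N z := by
  rw [SS, SS, SS, ← Finset.sum_sub_distrib]
  exact Finset.sum_congr rfl fun i _ => map_sub _ _ _

lemma even_odd (M : ℕ) (y : Om) :
    ∑ i ∈ Finset.range (2*M), Pn i y = SS M y + Pn 1 (SS M y) := by
  induction M with
  | zero => simp [SS]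
  | succ M ih =>
    have h1 : 2*(M+1) = (2*M) + 1 + 1 := by ring
    have h2 : Pn (2*M+1) y = Pn 1 (Pn (2*M) y) := by rw [← Pn_add, Nat.add_comm]
    have h3 : SS (M+1) y = SS M y + Pn (2*M) y := by
      rw [SS, SS, Finset.sum_range_succ]
    rw [h1, Finset.sum_range_succ, Finset.sum_range_succ, ih, h3, map_add, h2]
    ring

lemma telescope {M : ℕ} {u a : Om} (ha : u^3 = u + a) :
    ∑ i ∈ Finset.range M, Pn i a = Pn M u - u := by
  have h : ∀ i : ℕ, Pn i a = Pn (i+1) u - Pn i u := by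
    intro i
    have e : a = u^3 - u := by linear_combination -ha
    rw [e, map_sub, map_pow, ← Pn_succ]
  calc ∑ i ∈ Finset.range M, Pn i a = ∑ i ∈ Finset.range M, (Pn (i+1) u - Pn i u) :=
        Finset.sum_congr rfl fun i _ => h i
  _ = Pn M u - Pn 0 u := Finset.sum_range_sub (fun i => Pn i u) M
  _ = Pn M u - u := by rw [Pn_zero]

lemma inv_all {w : F9} (hw : w^2+2*w+2 = 0) : ∀ j : ℕ, Inv w j := by
  intro j
  induction j using Nat.strong_induction_on with
  | _ j ih =>
    match j with
    | 0 =>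
      right
      have e : Pn 2 (xs w 0) = ((xs w 0)^3)^3 := rfl
      have cube_sub : (xs w 0 - Wc w)^3 = (xs w 0)^3 - (Wc w)^3 := by
        linear_combination (xs w 0 * (Wc w)^2 - (xs w 0)^2 * Wc w) * h3Om
      have hw3 : Wc w + (Wc w)^3 = 1 := by
        rw [Wc, ← map_pow, ← map_add, w_cube hw, map_one]
      have e2 : Pn (2*3^0) (xs w 0) = xs w 0 - Wc w - (Wc w)^3 := by
        rw [show (2:ℕ)*3^0 = 2 from by norm_num, e, xs_zero, cube_sub, xs_zero]
      rw [e2]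
      linear_combination -hw3 - h3Om
    | (j'+1) =>
      have hIH : ∀ l ≤ j', Inv w l := fun l hl => ih l (by omega)
      have hInvj : Inv w j' := hIH j' le_rfl
      have hfixv : Pn (2*3^(j'+1)) (xs w j') = xs w j' := inv_fix hInvj
      have hu : (xs w (j'+1))^3 = xs w (j'+1) + ((xs w j')⁻¹ - Wc w) := xs_succ w j'
      have hza : Pn (2*3^(j'+1)) ((xs w j')⁻¹ - Wc w) = (xs w j')⁻¹ - Wc w := by
        rw [map_sub, map_inv₀, hfixv, Wc, Pn_even_cast]
      have hy3 : (Pn (2*3^(j'+1)) (xs w (j'+1)))^3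
          = Pn (2*3^(j'+1)) (xs w (j'+1)) + ((xs w j')⁻¹ - Wc w) := by
        rw [← map_pow, hu, map_add, hza]
      have hfactor : (Pn (2*3^(j'+1)) (xs w (j'+1)) - xs w (j'+1)) *
          ((Pn (2*3^(j'+1)) (xs w (j'+1)) - xs w (j'+1)) - 1) *
          ((Pn (2*3^(j'+1)) (xs w (j'+1)) - xs w (j'+1)) + 1) = 0 := by
        linear_combination hy3 - hu + (Pn (2*3^(j'+1)) (xs w (j'+1)) * (xs w (j'+1))^2
          - (Pn (2*3^(j'+1)) (xs w (j'+1)))^2 * xs w (j'+1)) * h3Om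
      rcases mul_eq_zero.mp hfactor with hf | hf
      · rcases mul_eq_zero.mp hf with hf' | hf'
        · -- the fixed case: contradiction via the trace computation
          exfalso
          have hfix : Pn (2*3^(j'+1)) (xs w (j'+1)) = xs w (j'+1) := by
            linear_combination hf'
          -- telescope sum vanishes
          have htel : ∑ i ∈ Finset.range (2*3^(j'+1)) , Pn i ((xs w j')⁻¹ - Wc w)
              = 0 := by
            rw [telescope hu, hfix, sub_self]
          -- compute the same sum via the descent
          have hdesc := desc hw j' hIH 0
          have hmob : mobq (qs w 0) (xs w j') = (xs w j')⁻¹ := by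
            rw [show qs w 0 = Q0 w from rfl, mobq, Q0]
            simp
          have hW0 : SS (3^(j'+1)) (algebraMap F9 Om w) = 0 := by
            rw [SS_cast]
            have hc : ((3^(j'+1) : ℕ) : Om) = 0 := by
              push_cast
              rw [h3Om]
              exact zero_pow (by omega : j'+1 ≠ 0)
            rw [hc, zero_mul]
          have hSSa : SS (3^(j'+1)) ((xs w j')⁻¹ - Wc w)
              = algebraMap F9 Om (bse w (qs w j')) := by
            rw [SS_sub_arg, Wc, hW0, sub_zero, ← hmob, hdesc, Nat.zero_add]
          rw [even_odd, hSSa] at htel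
          have hb : bse w (qs w j') + (bse w (qs w j'))^3 = 0 := by
            apply (algebraMap F9 Om).injective
            rw [map_add, map_pow, map_zero]
            calc algebraMap F9 Om (bse w (qs w j')) + (algebraMap F9 Om (bse w (qs w j')))^3
                = algebraMap F9 Om (bse w (qs w j'))
                  + Pn 1 (algebraMap F9 Om (bse w (qs w j'))) := by rw [Pn_succ, Pn_zero]
            _ = 0 := htel
          exact tau_ne hw j' hb
        · left
          linear_combination hf'
      · right
        linear_combination hf - h3Om
/-! ### Exact period of the chain elements -/

section Period
variable {β : Om}

lemma mult_mem {g : ℕ} (h : Pn (2*g) β = β) : ∀ s : ℕ, Pn (2*(g*s)) β = β := by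
  intro s
  induction s with
  | zero => simp [Pn_zero]
  | succ s ih =>
    have e : 2*(g*(s+1)) = 2*(g*s) + 2*g := by ring
    rw [e, Pn_add, h, ih]

lemma mod_mem {a b : ℕ} (ha : Pn (2*a) β = β) (hb : Pn (2*b) β = β) :
    Pn (2*(b % a)) β = β := by
  rcases Nat.eq_zero_or_pos a with h0 | hpos
  · rw [h0]; simpa [h0] using hb
  have e : b = b % a + a * (b / a) := by
    rw [Nat.add_comm, Nat.div_add_mod]
  have e2 : 2*b = 2*(b % a) + 2*(a*(b/a)) := by omega
  have h2 : Pn (2*b) β = Pn (2*(b % a)) β := by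
    rw [e2, Pn_add, mult_mem ha (b/a)]
  rw [← h2, hb]

lemma gcd_mem : ∀ a b : ℕ, Pn (2*a) β = β → Pn (2*b) β = β →
    Pn (2*(Nat.gcd a b)) β = β := by
  intro a
  induction a using Nat.strong_induction_on with
  | _ a ih =>
    intro b ha hb
    rcases Nat.eq_zero_or_pos a with h0 | hpos
    · subst h0; rw [Nat.gcd_zero_left]; exact hb
    rw [Nat.gcd_rec a b]
    exact ih (b % a) (Nat.mod_lt b hpos) a (mod_mem ha hb) ha

end Period

lemma no_small {w : F9} (hw : w^2+2*w+2 = 0) (M : ℕ) :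
    ∀ k : ℕ, 0 < k → k < 3^(M+1) → Pn (2*k) (xs w M) ≠ xs w M := by
  intro k hk0 hklt hfix
  have htop : Pn (2*3^(M+1)) (xs w M) = xs w M := inv_fix (inv_all hw M)
  have hg : Pn (2*(Nat.gcd k (3^(M+1)))) (xs w M) = xs w M := gcd_mem k _ hfix htop
  have hgdvd : Nat.gcd k (3^(M+1)) ∣ 3^(M+1) := Nat.gcd_dvd_right _ _
  obtain ⟨t, ht, hteq⟩ := (Nat.dvd_prime_pow Nat.prime_three).mp hgdvd
  have hglt : Nat.gcd k (3^(M+1)) < 3^(M+1) :=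
    lt_of_le_of_lt (Nat.le_of_dvd hk0 (Nat.gcd_dvd_left _ _)) hklt
  have htle : t ≤ M := by
    by_contra hc
    have : t = M + 1 := by omega
    rw [this] at hteq; omega
  have hdvdM : Nat.gcd k (3^(M+1)) ∣ 3^M := by
    rw [hteq]; exact pow_dvd_pow 3 htle
  obtain ⟨s, hs⟩ := hdvdM
  have hfixM : Pn (2*3^M) (xs w M) = xs w M := by
    rw [hs]; exact mult_mem hg s
  rcases inv_all hw M with h | h <;> rw [hfixM] at h
  · exact one_ne_zero (by linear_combination -h : (1:Om) = 0)
  · exact two_neOm (by linear_combination -h)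

lemma orbit_distinct {w : F9} (hw : w^2+2*w+2 = 0) (M : ℕ) :
    ∀ i j : ℕ, i < j → j < 3^(M+1) → Pn (2*i) (xs w M) ≠ Pn (2*j) (xs w M) := by
  intro i j hij hjlt heq
  have e : 2*j = 2*i + 2*(j-i) := by omega
  have h2 : Pn (2*i) (Pn (2*(j-i)) (xs w M)) = Pn (2*i) (xs w M) := by
    rw [← Pn_add, ← e, ← heq]
  have h3 : Pn (2*(j-i)) (xs w M) = xs w M := (Pn (2*i)).injective h2
  exact no_small hw M (j-i) (by omega) (by omega) h3
/-! ### The numerator/denominator polynomials -/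

noncomputable def nm (w : F9) : ℕ → F9[X] × F9[X]
  | 0 => (X, 1)
  | n+1 => ((nm w n).2^3, (nm w n).1^3 - (nm w n).1*(nm w n).2^2 + C w * (nm w n).2^3)

lemma nm_succ_fst (w : F9) (n : ℕ) : (nm w (n+1)).1 = (nm w n).2^3 := rfl

lemma nm_succ_snd (w : F9) (n : ℕ) :
    (nm w (n+1)).2 = (nm w n).1^3 - (nm w n).1*(nm w n).2^2 + C w * (nm w n).2^3 := rfl

lemma coprime_nm (w : F9) : ∀ n, IsCoprime (nm w n).1 (nm w n).2 := by
  intro n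
  induction n with
  | zero => exact isCoprime_one_right
  | succ n ih =>
    rw [nm_succ_fst, nm_succ_snd]
    have h1 : IsCoprime (nm w n).2 ((nm w n).1^3) := ih.symm.pow_right
    have e : (nm w n).1^3 - (nm w n).1*(nm w n).2^2 + C w * (nm w n).2^3
        = (nm w n).1^3 + (nm w n).2 * (C w * (nm w n).2^2 - (nm w n).1*(nm w n).2) := by
      ring
    have h2 : IsCoprime (nm w n).2
        ((nm w n).1^3 - (nm w n).1*(nm w n).2^2 + C w * (nm w n).2^3) := by
      rw [e]; exact h1.add_mul_left_right _
    exact h2.pow_left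

lemma deg_nm (w : F9) : ∀ n, (nm w n).1.natDegree ≤ 3^n ∧ (nm w n).2.natDegree ≤ 3^n := by
  intro n
  induction n with
  | zero =>
    constructor
    · simp [nm, Polynomial.natDegree_X]
    · simp [nm]
  | succ n ih =>
    obtain ⟨h1, h2⟩ := ih
    constructor
    · rw [nm_succ_fst, Polynomial.natDegree_pow]
      calc 3 * (nm w n).2.natDegree ≤ 3 * 3^n := by omega
      _ = 3^(n+1) := by ring
    · rw [nm_succ_snd]
      have b1 : ((nm w n).1^3).natDegree ≤ 3^(n+1) := by
        rw [Polynomial.natDegree_pow]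
        calc 3 * (nm w n).1.natDegree ≤ 3 * 3^n := by omega
        _ = 3^(n+1) := by ring
      have b2 : ((nm w n).1*(nm w n).2^2).natDegree ≤ 3^(n+1) := by
        calc ((nm w n).1*(nm w n).2^2).natDegree
            ≤ (nm w n).1.natDegree + ((nm w n).2^2).natDegree := Polynomial.natDegree_mul_le
        _ = (nm w n).1.natDegree + 2 * (nm w n).2.natDegree := by
            rw [Polynomial.natDegree_pow]
        _ ≤ 3^n + 2*3^n := by omega
        _ = 3^(n+1) := by ring
      have b3 : (C w * (nm w n).2^3).natDegree ≤ 3^(n+1) := by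
        calc (C w * (nm w n).2^3).natDegree ≤ ((nm w n).2^3).natDegree :=
            Polynomial.natDegree_C_mul_le _ _
        _ = 3 * (nm w n).2.natDegree := Polynomial.natDegree_pow _ _
        _ ≤ 3^(n+1) := by
            calc 3 * (nm w n).2.natDegree ≤ 3 * 3^n := by omega
            _ = 3^(n+1) := by ring
      calc ((nm w n).1^3 - (nm w n).1*(nm w n).2^2 + C w * (nm w n).2^3).natDegree
          ≤ max ((nm w n).1^3 - (nm w n).1*(nm w n).2^2).natDegree
              (C w * (nm w n).2^3).natDegree := Polynomial.natDegree_add_le _ _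
      _ ≤ 3^(n+1) := by
          refine max_le ?_ b3
          calc ((nm w n).1^3 - (nm w n).1*(nm w n).2^2).natDegree
              ≤ max ((nm w n).1^3).natDegree ((nm w n).1*(nm w n).2^2).natDegree :=
              Polynomial.natDegree_sub_le _ _
          _ ≤ 3^(n+1) := max_le b1 b2

lemma chain_eval {w : F9} (hw : w^2+2*w+2 = 0) (M : ℕ) : ∀ k, k ≤ M →
    Polynomial.aeval (xs w M) (nm w k).2 ≠ 0 ∧
    Polynomial.aeval (xs w M) (nm w k).1
      = xs w (M-k) * Polynomial.aeval (xs w M) (nm w k).2 := by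
  intro k
  induction k with
  | zero =>
    intro _
    constructor
    · show Polynomial.aeval (xs w M) (1 : F9[X]) ≠ 0
      rw [map_one]; exact one_ne_zero
    · show Polynomial.aeval (xs w M) (X : F9[X]) = xs w (M-0) * Polynomial.aeval (xs w M) (1:F9[X])
      rw [Polynomial.aeval_X, map_one, mul_one, Nat.sub_zero]
  | succ k ihk =>
    intro hk1
    obtain ⟨hD, hN⟩ := ihk (by omega)
    have hMk : M - k = (M - (k+1)) + 1 := by omega
    have hcube : (xs w (M-k))^3 = xs w (M-k) + ((xs w (M-(k+1)))⁻¹ - Wc w) := by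
      rw [hMk]; exact xs_succ w (M-(k+1))
    have hxne : xs w (M-(k+1)) ≠ 0 := notmem_ne_zero (inv_notmem (inv_all hw _))
    have hval : (xs w (M-k))^3 - xs w (M-k) + Wc w = (xs w (M-(k+1)))⁻¹ := by
      rw [hcube]; ring
    have hEval : Polynomial.aeval (xs w M) (nm w (k+1)).2
        = (Polynomial.aeval (xs w M) (nm w k).2)^3 *
          ((xs w (M-k))^3 - xs w (M-k) + Wc w) := by
      rw [nm_succ_snd, map_add, map_sub, map_pow, map_mul, map_pow, map_mul, map_pow,
        Polynomial.aeval_C, hN]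
      rw [show (algebraMap F9 Om) w = Wc w from rfl]
      ring
    constructor
    · rw [hEval, hval]
      exact mul_ne_zero (pow_ne_zero _ hD) (inv_ne_zero hxne)
    · rw [nm_succ_fst, map_pow, hEval, hval]
      rw [show xs w (M-(k+1)) * ((Polynomial.aeval (xs w M) (nm w k).2)^3
          * (xs w (M-(k+1)))⁻¹)
        = (Polynomial.aeval (xs w M) (nm w k).2)^3
          * (xs w (M-(k+1)) * (xs w (M-(k+1)))⁻¹) from by ring,
        mul_inv_cancel₀ hxne, mul_one]

lemma den_root {w : F9} (hw : w^2+2*w+2 = 0) (M : ℕ) :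
    Polynomial.aeval (xs w M) (nm w (M+1)).2 = 0 := by
  obtain ⟨hD, hN⟩ := chain_eval hw M M le_rfl
  have hEval : Polynomial.aeval (xs w M) (nm w (M+1)).2
      = (Polynomial.aeval (xs w M) (nm w M).2)^3 *
        ((xs w (M-M))^3 - xs w (M-M) + Wc w) := by
    rw [nm_succ_snd, map_add, map_sub, map_pow, map_mul, map_pow, map_mul, map_pow,
      Polynomial.aeval_C, hN]
    rw [show (algebraMap F9 Om) w = Wc w from rfl]
    ring
  rw [hEval, Nat.sub_self]
  have h0 : (xs w 0)^3 - xs w 0 + Wc w = 0 := by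
    rw [xs_zero]; ring
  rw [h0, mul_zero]

lemma den_ne (w : F9) (hw : w^2+2*w+2 = 0) : ∀ n, (nm w n).2 ≠ 0 := by
  intro n h0
  have := (chain_eval hw n n le_rfl).1
  rw [h0, map_zero] at this
  exact this rfl

noncomputable def PnA (i : ℕ) : Om →ₐ[F9] Om :=
  AlgHom.mk' (Pn (2*i)) (fun c x => by
    rw [Algebra.smul_def, Algebra.smul_def, map_mul, Pn_even_cast])

lemma aeval_Pn (i : ℕ) (β : Om) (p : F9[X]) :
    Polynomial.aeval (Pn (2*i) β) p = Pn (2*i) (Polynomial.aeval β p) := by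
  have h := Polynomial.aeval_algHom_apply (PnA i) β p
  exact h

lemma many_roots {w : F9} (hw : w^2+2*w+2 = 0) {d : F9[X]} (M : ℕ) (hd0 : d ≠ 0)
    (hroot : Polynomial.aeval (xs w M) d = 0) : 3^(M+1) ≤ d.natDegree := by
  classical
  set q : Om[X] := d.map (algebraMap F9 Om) with hq
  have hq0 : q ≠ 0 := by
    intro h
    exact hd0 (Polynomial.map_injective _ (algebraMap F9 Om).injective (by rw [← hq, h]; simp))
  have hrooti : ∀ i : ℕ, q.IsRoot (Pn (2*i) (xs w M)) := by
    intro i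
    have h1 : Polynomial.aeval (Pn (2*i) (xs w M)) d = 0 := by
      rw [aeval_Pn, hroot, map_zero]
    rw [Polynomial.IsRoot, hq, Polynomial.eval_map, ← Polynomial.aeval_def]
    exact h1
  set S := (Finset.range (3^(M+1))).image (fun i => Pn (2*i) (xs w M)) with hS
  have hcard : S.card = 3^(M+1) := by
    rw [hS, Finset.card_image_of_injOn, Finset.card_range]
    intro i hi j hj hij
    rcases lt_trichotomy i j with h|h|h
    · exact absurd hij (orbit_distinct hw M i j h (Finset.mem_range.mp hj))
    · exact h
    · exact absurd hij.symm (orbit_distinct hw M j i h (Finset.mem_range.mp hi))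
  have hsub : S ⊆ q.roots.toFinset := by
    intro x hx
    rw [hS, Finset.mem_image] at hx
    obtain ⟨i, _, rfl⟩ := hx
    rw [Multiset.mem_toFinset, Polynomial.mem_roots hq0]
    exact hrooti i
  calc 3^(M+1) = S.card := hcard.symm
  _ ≤ q.roots.toFinset.card := Finset.card_le_card hsub
  _ ≤ Multiset.card q.roots := Multiset.toFinset_card_le _
  _ ≤ q.natDegree := Polynomial.card_roots' q
  _ = d.natDegree := Polynomial.natDegree_map_eq_of_injective (algebraMap F9 Om).injective d

lemma den_deg {w : F9} (hw : w^2+2*w+2 = 0) (M : ℕ) :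
    (nm w (M+1)).2.natDegree = 3^(M+1) :=
  le_antisymm (deg_nm w (M+1)).2
    (many_roots hw M (den_ne w hw (M+1)) (den_root hw M))

lemma den_irred {w : F9} (hw : w^2+2*w+2 = 0) (M : ℕ) : Irreducible (nm w (M+1)).2 := by
  constructor
  · intro hu
    have h0 := Polynomial.natDegree_eq_zero_of_isUnit hu
    rw [den_deg hw M] at h0
    exact absurd h0 (by positivity)
  · intro a b hab
    have hd0 : (nm w (M+1)).2 ≠ 0 := den_ne w hw (M+1)
    have ha0 : a ≠ 0 := fun h => hd0 (by rw [hab, h, zero_mul])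
    have hb0 : b ≠ 0 := fun h => hd0 (by rw [hab, h, mul_zero])
    have hsum : a.natDegree + b.natDegree = 3^(M+1) := by
      rw [← Polynomial.natDegree_mul ha0 hb0, ← hab, den_deg hw M]
    have hroot : Polynomial.aeval (xs w M) a * Polynomial.aeval (xs w M) b = 0 := by
      rw [← map_mul, ← hab, den_root hw M]
    have hunit : ∀ c : F9[X], c ≠ 0 → c.natDegree = 0 → IsUnit c := by
      intro c hc0 hcd
      rw [Polynomial.eq_C_of_natDegree_eq_zero hcd]
      refine Polynomial.isUnit_C.mpr (isUnit_iff_ne_zero.mpr ?_)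
      intro h
      exact hc0 (by rw [Polynomial.eq_C_of_natDegree_eq_zero hcd, h, map_zero])
    rcases mul_eq_zero.mp hroot with h | h
    · right
      have := many_roots hw M ha0 h
      exact hunit b hb0 (by omega)
    · left
      have := many_roots hw M hb0 h
      exact hunit a ha0 (by omega)
/-! ### Relating the iterates to the numerator/denominator pairs -/

lemma hCw (w : F9) : algebraMap F9 (RatFunc F9) w = algebraMap F9[X] (RatFunc F9) (C w) := by
  rw [IsScalarTower.algebraMap_apply F9 F9[X] (RatFunc F9), Polynomial.algebraMap_eq]

lemma iter_eq {w : F9} (hw : w^2+2*w+2 = 0) : ∀ n : ℕ,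
    invIter (X^3 - X + C w) n
      = algebraMap F9[X] (RatFunc F9) (nm w n).1 / algebraMap F9[X] (RatFunc F9) (nm w n).2 := by
  intro n
  induction n with
  | zero =>
    show RatFunc.X = algebraMap F9[X] (RatFunc F9) X / algebraMap F9[X] (RatFunc F9) 1
    rw [map_one, div_one, RatFunc.algebraMap_X]
  | succ n ih =>
    have hQ : algebraMap F9[X] (RatFunc F9) (nm w n).2 ≠ 0 :=
      RatFunc.algebraMap_ne_zero (den_ne w hw n)
    show (Polynomial.aeval (invIter (X^3 - X + C w) n) (X^3 - X + C w))⁻¹ = _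
    rw [ih]
    have hval : Polynomial.aeval
        (algebraMap F9[X] (RatFunc F9) (nm w n).1 / algebraMap F9[X] (RatFunc F9) (nm w n).2)
        ((X:F9[X])^3 - X + C w)
        = algebraMap F9[X] (RatFunc F9) (nm w (n+1)).2
          / algebraMap F9[X] (RatFunc F9) (nm w (n+1)).1 := by
      rw [map_add, map_sub, map_pow, Polynomial.aeval_X, Polynomial.aeval_C, hCw,
        nm_succ_snd, nm_succ_fst, map_add, map_sub, map_pow, map_mul, map_pow,
        map_mul, map_pow]
      field_simp
    rw [hval, inv_div]

lemma denom_assoc {w : F9} (hw : w^2+2*w+2 = 0) (n : ℕ) :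
    Associated (nm w n).2 (invIter (X^3 - X + C w) n).denom := by
  set x := invIter (X^3 - X + C w) n with hx
  have hq : (nm w n).2 ≠ 0 := den_ne w hw n
  have hden : x.denom ≠ 0 := RatFunc.denom_ne_zero x
  have h2 : algebraMap F9[X] (RatFunc F9) (nm w n).1 / algebraMap F9[X] (RatFunc F9) (nm w n).2
      = algebraMap F9[X] (RatFunc F9) x.num / algebraMap F9[X] (RatFunc F9) x.denom := by
    rw [RatFunc.num_div_denom]
    exact (iter_eq hw n).symm
  rw [div_eq_div_iff (RatFunc.algebraMap_ne_zero hq) (RatFunc.algebraMap_ne_zero hden)] at h2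
  have hcross : (nm w n).1 * x.denom = x.num * (nm w n).2 := by
    apply RatFunc.algebraMap_injective F9
    rw [map_mul, map_mul]
    exact h2
  have dvd1 : (nm w n).2 ∣ x.denom := by
    have hdd : (nm w n).2 ∣ x.denom * (nm w n).1 := ⟨x.num, by
      rw [show x.denom * (nm w n).1 = (nm w n).1 * x.denom from mul_comm _ _, hcross]; ring⟩
    exact ((coprime_nm w n).symm).dvd_of_dvd_mul_right hdd
  have dvd2 : x.denom ∣ (nm w n).2 := by
    have hdd : x.denom ∣ (nm w n).2 * x.num := ⟨(nm w n).1, by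
      rw [show (nm w n).2 * x.num = x.num * (nm w n).2 from mul_comm _ _, ← hcross]; ring⟩
    exact ((RatFunc.isCoprime_num_denom x).symm).dvd_of_dvd_mul_right hdd
  exact associated_of_dvd_dvd dvd1 dvd2

end InvStabF9

/-- Example 1.4: Let `w ∈ F_9` be a root of `X² + 2X + 2`. Then
`X³ - X + w` is inversely stable over `F_9`. -/
theorem inverselyStable_F9 (w : GaloisField 3 2) (hw : w ^ 2 + 2 * w + 2 = 0) :
    InverselyStable (X ^ 3 - X + C w) := by
  have hw' : w^2 + 2*w + 2 = 0 := hw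
  have hdeg : ∀ n : ℕ, 1 ≤ n → (invIter (X^3 - X + C w) n).denom.natDegree = 3^n := by
    intro n hn
    obtain ⟨M, rfl⟩ : ∃ M, n = M + 1 := ⟨n - 1, by omega⟩
    rw [← Polynomial.natDegree_eq_of_degree_eq
      (Polynomial.degree_eq_degree_of_associated (InvStabF9.denom_assoc hw' (M+1))),
      InvStabF9.den_deg hw' M]
  constructor
  · intro n hn
    obtain ⟨M, rfl⟩ : ∃ M, n = M + 1 := ⟨n - 1, by omega⟩
    exact (InvStabF9.denom_assoc hw' (M+1)).irreducible (InvStabF9.den_irred hw' M)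
  · intro m n hm hn hmn heq
    apply hmn
    have h1 := hdeg m hm
    have h2 := hdeg n hn
    rw [heq] at h1
    exact Nat.pow_right_injective (by norm_num) (h1.symm.trans h2 : (3:ℕ)^m = 3^n)
end

section
/- Let q = p^e with e ≥ 2 and e = t. Then no polynomial of the form f(X) = X^{p^t} + aX + b ∈ F_q[X] is inversely stable over F_q. -/
open Polynomial

open scoped Classical in
lemma invIter_one_denom {K : Type*} [Field K] (g : Polynomial K) (hg : g.Monic) :
    (invIter g 1).denom = g := by
  have h1 : invIter g 1 = (algebraMap K[X] (RatFunc K) g)⁻¹ := by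
    show (Polynomial.aeval (invIter g 0) g)⁻¹ = _
    show (Polynomial.aeval (RatFunc.X) g)⁻¹ = _
    rw [← RatFunc.algebraMap_X, aeval_algebraMap_apply]
    simp
  rw [h1, show (algebraMap K[X] (RatFunc K) g)⁻¹
      = algebraMap K[X] (RatFunc K) 1 / algebraMap K[X] (RatFunc K) g by rw [map_one, one_div]]
  rw [RatFunc.denom_div 1 hg.ne_zero, gcd_one_left, EuclideanDomain.div_one, hg.leadingCoeff]
  simp

/-- Let `q = p^e` with `e = t ≥ 2`. Then no polynomial of the form
`f(X) = X^(p^t) + aX + b ∈ F_q[X]` is inversely stable over `F_q`. -/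
theorem not_inverselyStable_of_t_eq_e (p e : ℕ) [Fact p.Prime] (he : 2 ≤ e)
    (a b : GaloisField p e) :
    ¬ InverselyStable (X ^ (p ^ e) + C a * X + C b) := by
  classical
  intro hstab
  have hp : p.Prime := Fact.out
  have hp2 : 2 ≤ p := hp.two_le
  have hq2 : 2 ≤ p ^ e := le_trans hp2 (Nat.le_self_pow (show e ≠ 0 by omega) p)
  haveI : Fintype (GaloisField p e) := Fintype.ofFinite _
  have hcard : Fintype.card (GaloisField p e) = p ^ e := by
    rw [← Nat.card_eq_fintype_card]; exact GaloisField.card p e (show e ≠ 0 by omega)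
  have hKq : ∀ c : GaloisField p e, c ^ (p ^ e) = c := fun c => by
    rw [← hcard]; exact FiniteField.pow_card c
  set f : (GaloisField p e)[X] := X ^ (p ^ e) + C a * X + C b with hf
  have hfe : f = X ^ (p ^ e) + (C a * X + C b) := by rw [hf]; ring
  have hflt : (C a * X + C b).degree < ((p ^ e : ℕ) : WithBot ℕ) :=
    lt_of_le_of_lt degree_linear_le (by exact_mod_cast (show 1 < p ^ e by omega))
  have hfm : f.Monic := by
    rw [hfe]
    exact monic_X_pow_add hflt
  have hfdeg : f.natDegree = p ^ e := by
    have hdeg : f.degree = ((p ^ e : ℕ) : WithBot ℕ) := by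
      rw [hfe, degree_add_eq_left_of_degree_lt, degree_X_pow]
      rw [degree_X_pow]; exact hflt
    exact natDegree_eq_of_degree_eq_some hdeg
  have hfirr : Irreducible f := by
    have h1 := hstab.1 1 le_rfl
    rwa [invIter_one_denom f hfm] at h1
  -- Now derive a contradiction: f is never irreducible.
  by_cases ha0 : a = 0
  · -- f = (X + C b)^(p^e)
    have hfeq : f = (X + C b) ^ (p ^ e) := by
      rw [hf, ha0, add_pow_char_pow, ← C_pow, hKq b, map_zero, zero_mul, add_zero]
    rw [hfeq] at hfirr
    exact not_irreducible_pow (show p ^ e ≠ 1 by omega) hfirr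
  · haveI hfact : Fact (Irreducible f) := ⟨hfirr⟩
    set F := AdjoinRoot f with hF
    set α : F := AdjoinRoot.root f with hα
    haveI : CharP F p :=
      charP_of_injective_algebraMap (algebraMap (GaloisField p e) F).injective p
    have hαq : α ^ (p ^ e)
        = -(algebraMap _ F a * α + algebraMap _ F b) := by
      have h0 : (aeval α) (X ^ (p ^ e) + C a * X + C b) = 0 := by
        rw [hα, AdjoinRoot.aeval_eq]; exact AdjoinRoot.mk_self
      simp only [map_add, map_mul, map_pow, aeval_X, aeval_C] at h0
      linear_combination h0
    set ψ : F →+* F := iterateFrobenius F p e with hψdef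
    have hψ : ∀ x : F, ψ x = x ^ (p ^ e) := fun x => rfl
    have hψc : ∀ c : GaloisField p e,
        ψ (algebraMap _ F c) = algebraMap _ F c := fun c => by
      rw [hψ, ← map_pow, hKq c]
    have hiter : ∀ (k : ℕ) (x : F), ψ^[k] x = x ^ ((p ^ e) ^ k) := by
      intro k
      induction k with
      | zero => intro x; simp
      | succ n ih =>
          intro x
          rw [Function.iterate_succ_apply', ih, hψ, ← pow_mul, ← pow_succ]
    -- find m with 1 ≤ m < p^e and ψ^[m] α = α
    obtain ⟨m, hm1, hmq, hmα⟩ : ∃ m : ℕ, 1 ≤ m ∧ m < p ^ e ∧ ψ^[m] α = α := by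
      by_cases ha1 : a = -1
      · refine ⟨p, by omega, ?_, ?_⟩
        · calc p = p ^ 1 := (pow_one p).symm
            _ < p ^ e := Nat.pow_lt_pow_right (by omega) (by omega)
        · have key : ∀ k : ℕ, ψ^[k] α = α - (k : F) * algebraMap _ F b := by
            intro k
            induction k with
            | zero => simp
            | succ n ih =>
                rw [Function.iterate_succ_apply', ih, map_sub, map_mul, map_natCast, hψc,
                  hψ, hαq, ha1]
                simp only [map_neg, map_one]
                push_cast
                ring
          rw [key p, CharP.cast_eq_zero F p, zero_mul, sub_zero]
      · -- a ≠ 0, a ≠ -1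
        have ha1' : a + 1 ≠ 0 := fun h => ha1 (by linear_combination h)
        set c : GaloisField p e := -b / (a + 1) with hc
        have hcb : (a + 1) * c = -b := by
          rw [hc]; field_simp
        have hcbF : (algebraMap _ F a + 1) * algebraMap _ F c = -algebraMap _ F b := by
          have h2 : algebraMap _ F ((a + 1) * c) = algebraMap _ F (-b) := by rw [hcb]
          simpa only [map_add, map_mul, map_one, map_neg] using h2
        refine ⟨p ^ e - 1, by omega, by omega, ?_⟩
        have key : ∀ k : ℕ, ψ^[k] α
            = algebraMap _ F ((-a) ^ k) * (α - algebraMap _ F c) + algebraMap _ F c := by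
          intro k
          induction k with
          | zero => simp
          | succ n ih =>
              rw [Function.iterate_succ_apply', ih, map_add, map_mul, hψc, map_sub, hψc, hψ,
                hαq, pow_succ, map_mul, map_neg]
              linear_combination (-(algebraMap (GaloisField p e) F ((-a) ^ n))) * hcbF
        have hone : (-a) ^ (p ^ e - 1) = 1 := by
          have h3 := FiniteField.pow_card_sub_one_eq_one (-a) (neg_ne_zero.mpr ha0)
          rwa [hcard] at h3
        rw [key, hone, map_one, one_mul]
        ring
    -- every element of F satisfies y ^ ((p^e)^m) = y
    have hKqm : ∀ (k : ℕ) (c : GaloisField p e), c ^ ((p ^ e) ^ k) = c := by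
      intro k c
      induction k with
      | zero => simp
      | succ n ih => rw [pow_succ, pow_mul, ih, hKq]
    have hfix : ∀ y : F, y ^ ((p ^ e) ^ m) = y := by
      intro y
      obtain ⟨P, rfl⟩ := AdjoinRoot.mk_surjective y
      rw [← AdjoinRoot.aeval_eq]
      have hαm : α ^ ((p ^ e) ^ m) = α := by rw [← hiter, hmα]
      set Ψ : F →+* F := iterateFrobenius F p (e * m) with hΨdef
      have hΨ : ∀ x : F, Ψ x = x ^ ((p ^ e) ^ m) := fun x => by
        rw [hΨdef, iterateFrobenius_def, pow_mul]
      have hcomp : Ψ.comp (algebraMap (GaloisField p e) F) = algebraMap (GaloisField p e) F := by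
        ext1 c
        rw [RingHom.comp_apply, hΨ, ← map_pow, hKqm m c]
      calc (aeval α P) ^ ((p ^ e) ^ m) = Ψ (aeval α P) := (hΨ _).symm
        _ = eval₂ (Ψ.comp (algebraMap (GaloisField p e) F)) (Ψ α) P := by
            rw [aeval_def, hom_eval₂]
        _ = aeval α P := by rw [hcomp, hΨ, hαm, ← aeval_def]
    -- cardinality contradiction
    set pb : PowerBasis (GaloisField p e) F := AdjoinRoot.powerBasis' hfm with hpb
    letI : Fintype F := Module.fintypeOfFintype pb.basis
    have hcardF : Fintype.card F = (p ^ e) ^ (p ^ e) := by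
      rw [Module.card_fintype pb.basis, hcard, Fintype.card_fin]
      have hdim : pb.dim = p ^ e := hfdeg
      rw [hdim]
    have hNm : 1 < (p ^ e) ^ m := Nat.one_lt_pow (by omega) (by omega)
    set g : F[X] := X ^ ((p ^ e) ^ m) - X with hg
    have hgdeg : g.natDegree = (p ^ e) ^ m := by
      rw [hg]
      exact FiniteField.X_pow_card_sub_X_natDegree_eq F hNm
    have hg0 : g ≠ 0 := fun h => by
      rw [h, natDegree_zero] at hgdeg
      omega
    have hroots : ∀ y : F, y ∈ g.roots := by
      intro y
      rw [mem_roots hg0]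
      show eval y g = 0
      rw [hg]
      simp [hfix y]
    have hle : Fintype.card F ≤ (p ^ e) ^ m := by
      have hsub : (Finset.univ : Finset F) ⊆ g.roots.toFinset := fun y _ =>
        Multiset.mem_toFinset.mpr (hroots y)
      calc Fintype.card F = (Finset.univ : Finset F).card := rfl
        _ ≤ g.roots.toFinset.card := Finset.card_le_card hsub
        _ ≤ Multiset.card g.roots := g.roots.toFinset_card_le
        _ ≤ g.natDegree := g.card_roots'
        _ = (p ^ e) ^ m := hgdeg
    rw [hcardF] at hle
    have hlt := Nat.pow_lt_pow_right (show 1 < p ^ e by omega) hmq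
    omega
end
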